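/- arXiv:1607.02689 — 10 statements merged into one kernel-verified Lean document; each statement's English description precedes it below -/
import Mathlib

section
/- Let 0 < δ < 1 and define q(x) = x(e^{εx} + 1) + λ(e^{εx} - 1) for x > 0, where ε = 1/δ - 1 and λ > -2δ. Then q is strictly log-concave on (0,∞), i.e., q'(x)^2 - q''(x)q(x) > 0 for all x > 0. -/
/-!
Writing `E = exp (ε x)`, a direct computation gives
`q'² - q'' q = ((E - 1)² - E (ε x)²) + E (ε λ + 2)²`.
The second summand is nonnegative, and the first is positive for `ε x ≠ 0` because
`E - 1 = exp (ε x / 2) · 2 sinh (ε x / 2)` and `|2 sinh (t / 2)| > |t|` for `t ≠ 0`.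
-/

open Real

namespace Real

theorem exp_sub_one_eq_exp_half_mul_two_sinh_half (u : ℝ) :
    exp u - 1 = exp (u / 2) * (2 * sinh (u / 2)) := by
  rw [sinh_eq, mul_div_cancel₀ _ two_ne_zero, mul_sub, ← exp_add, ← exp_add, add_halves,
    add_neg_cancel, exp_zero]

theorem exp_mul_sq_lt_sq_exp_sub_one {u : ℝ} (hu : u ≠ 0) :
    exp u * u ^ 2 < (exp u - 1) ^ 2 := by
  have habs : |u| < |2 * sinh (u / 2)| := by
    rw [abs_mul, abs_two, abs_sinh, abs_div, abs_two]
    have := self_lt_sinh_iff.mpr (half_pos (abs_pos.mpr hu))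
    linarith
  have hsq : u ^ 2 < (2 * sinh (u / 2)) ^ 2 := sq_lt_sq.mpr habs
  have hexp : exp u = exp (u / 2) ^ 2 := by rw [← exp_nat_mul]; ring_nf
  calc exp u * u ^ 2 < exp u * (2 * sinh (u / 2)) ^ 2 := by gcongr
    _ = (exp u - 1) ^ 2 := by
      rw [exp_sub_one_eq_exp_half_mul_two_sinh_half, mul_pow _ (2 * _), ← hexp]

end Real

section

variable (ε lam : ℝ)

theorem hasDerivAt_exp_const_mul (x : ℝ) :
    HasDerivAt (fun y => exp (ε * y)) (ε * exp (ε * x)) x := by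
  simpa [mul_comm] using ((hasDerivAt_id x).const_mul ε).exp

theorem deriv_mul_exp_add_one_add_mul_exp_sub_one :
    deriv (fun x => x * (exp (ε * x) + 1) + lam * (exp (ε * x) - 1)) =
      fun x => exp (ε * x) * (1 + ε * (x + lam)) + 1 := by
  funext x
  refine HasDerivAt.deriv ?_
  have h := ((hasDerivAt_id x).mul ((hasDerivAt_exp_const_mul ε x).add_const 1)).add
    (((hasDerivAt_exp_const_mul ε x).sub_const 1).const_mul lam)
  exact h.congr_deriv (by simp only [id]; ring)

theorem deriv_exp_mul_one_add_mul_add_one :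
    deriv (fun x => exp (ε * x) * (1 + ε * (x + lam)) + 1) =
      fun x => ε * exp (ε * x) * (2 + ε * (x + lam)) := by
  funext x
  refine HasDerivAt.deriv ?_
  have h := ((hasDerivAt_exp_const_mul ε x).mul
    ((((hasDerivAt_id x).add_const lam).const_mul ε).const_add 1)).add_const 1
  exact h.congr_deriv (by simp only [id]; ring)

theorem logConcavity_defect_eq (E x : ℝ) :
    (E * (1 + ε * (x + lam)) + 1) ^ 2 -
        ε * E * (2 + ε * (x + lam)) * (x * (E + 1) + lam * (E - 1)) =
      ((E - 1) ^ 2 - E * (ε * x) ^ 2) + E * (ε * lam + 2) ^ 2 := by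
  ring

end

theorem stmt_1_general (δ lam : ℝ) (hδ : 0 < δ) (hδ1 : δ < 1)
    (ε : ℝ) (hε : ε = 1 / δ - 1)
    (q : ℝ → ℝ) (hq : ∀ x, q x = x * (Real.exp (ε * x) + 1) + lam * (Real.exp (ε * x) - 1)) :
    ∀ x : ℝ, 0 < x → (deriv q x) ^ 2 - (deriv (deriv q) x) * q x > 0 := by
  intro x hx
  have hε0 : 0 < ε := by
    rw [hε, sub_pos]
    exact one_lt_one_div hδ hδ1
  rw [funext hq, deriv_mul_exp_add_one_add_mul_exp_sub_one,
    deriv_exp_mul_one_add_mul_add_one, logConcavity_defect_eq]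
  have hmain := exp_mul_sq_lt_sq_exp_sub_one (mul_pos hε0 hx).ne'
  have hrest : 0 ≤ exp (ε * x) * (ε * lam + 2) ^ 2 := by positivity
  linarith

theorem stmt_1 (δ lam : ℝ) (hδ : 0 < δ) (hδ1 : δ < 1) (hlam : lam > -2 * δ)
    (ε : ℝ) (hε : ε = 1 / δ - 1)
    (q : ℝ → ℝ) (hq : ∀ x, q x = x * (Real.exp (ε * x) + 1) + lam * (Real.exp (ε * x) - 1)) :
    ∀ x : ℝ, 0 < x → (deriv q x) ^ 2 - (deriv (deriv q) x) * q x > 0 :=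
  stmt_1_general δ lam hδ hδ1 ε hε q hq
end

section
/- Let k ≥ 1, δ_1, ..., δ_k ∈ (0, δ) be positive reals and λ_1, ..., λ_k > 0. Then the function h(u) = Σ_{i=1}^k λ_i (e^{-u/δ} - e^{-u/δ_i}) is strictly log-concave on (0, ∞). -/
/-!
Write `1/δ_i = 1/δ - c_i` with `c_i < 0`. Then `h(u) = e^{-u/δ} g(u)` with
`g(u) = ∑ λ_i (1 - e^{c_i u})`, a positive combination of strictly concave functions, and
positive for `u > 0`. So `log h(u) = -u/δ + log g(u)` is a linear function plus the logarithm
of a positive strictly concave function, and the latter is strictly concave because `log` is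
concave and strictly increasing.
-/

open Real Set

section StrictConcaveOn

variable {𝕜 E β ι : Type*} [Semiring 𝕜] [PartialOrder 𝕜] [AddCommMonoid E] [SMul 𝕜 E]
  [AddCommMonoid β] [PartialOrder β] [IsOrderedCancelAddMonoid β] [DistribMulAction 𝕜 β]

theorem StrictConcaveOn.sum {s : Set E} {f : ι → E → β} {t : Finset ι} (ht : t.Nonempty)
    (hf : ∀ i ∈ t, StrictConcaveOn 𝕜 s (f i)) :
    StrictConcaveOn 𝕜 s (fun x => ∑ i ∈ t, f i x) := by
  obtain ⟨i₀, hi₀⟩ := ht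
  refine ⟨(hf i₀ hi₀).1, fun x hx y hy hxy a b ha hb hab => ?_⟩
  simp only [Finset.smul_sum, ← Finset.sum_add_distrib]
  exact Finset.sum_lt_sum_of_nonempty ⟨i₀, hi₀⟩ fun i hi => (hf i hi).2 hx hy hxy ha hb hab

end StrictConcaveOn

section Real

variable {E : Type*} [AddCommMonoid E] [SMul ℝ E] {s : Set E} {f : E → ℝ}

theorem StrictConcaveOn.const_mul {c : ℝ} (hc : 0 < c) (hf : StrictConcaveOn ℝ s f) :
    StrictConcaveOn ℝ s (fun x => c * f x) := by
  refine ⟨hf.1, fun x hx y hy hxy a b ha hb hab => ?_⟩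
  calc a • (c * f x) + b • (c * f y) = c * (a • f x + b • f y) := by
        simp only [smul_eq_mul]; ring
    _ < c * f (a • x + b • y) := mul_lt_mul_of_pos_left (hf.2 hx hy hxy ha hb hab) hc

theorem StrictConcaveOn.log (hf : StrictConcaveOn ℝ s f) (hpos : ∀ x ∈ s, 0 < f x) :
    StrictConcaveOn ℝ s (fun x => Real.log (f x)) := by
  refine ⟨hf.1, fun x hx y hy hxy a b ha hb hab => ?_⟩
  calc a • Real.log (f x) + b • Real.log (f y)
      ≤ Real.log (a • f x + b • f y) :=
        strictConcaveOn_log_Ioi.concaveOn.2 (hpos x hx) (hpos y hy) ha.le hb.le hab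
    _ < Real.log (f (a • x + b • y)) :=
        Real.log_lt_log (by have := hpos x hx; have := hpos y hy; simp only [smul_eq_mul]; positivity)
          (hf.2 hx hy hxy ha hb hab)

end Real

theorem strictConvexOn_exp_mul {c : ℝ} (hc : c ≠ 0) :
    StrictConvexOn ℝ univ (fun u => exp (c * u)) := by
  refine ⟨convex_univ, fun x _ y _ hxy a b ha hb hab => ?_⟩
  have hcxy : c * x ≠ c * y := (mul_right_injective₀ hc).ne hxy
  simpa only [smul_eq_mul, mul_add, mul_left_comm c] using
    strictConvexOn_exp.2 (mem_univ _) (mem_univ _) hcxy ha hb hab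

theorem strictConcaveOn_one_sub_exp_mul {c : ℝ} (hc : c ≠ 0) :
    StrictConcaveOn ℝ univ (fun u => 1 - exp (c * u)) :=
  ((strictConvexOn_exp_mul hc).neg.add_const 1).congr fun u _ => by
    simp only [Pi.add_apply, Pi.neg_apply]; ring

theorem stmt_2 (k : ℕ) (hk : 1 ≤ k) (δ : ℝ) (δi lami : Fin k → ℝ)
    (hδi : ∀ i, 0 < δi i ∧ δi i < δ) (hlami : ∀ i, 0 < lami i)
    (h : ℝ → ℝ)
    (hh : ∀ u, h u = ∑ i, lami i * (Real.exp (-u / δ) - Real.exp (-u / δi i))) :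
    StrictConcaveOn ℝ (Set.Ioi (0 : ℝ)) (fun u => Real.log (h u)) := by
  have hne : (Finset.univ : Finset (Fin k)).Nonempty := ⟨⟨0, hk⟩, Finset.mem_univ _⟩
  set c : Fin k → ℝ := fun i => 1 / δ - 1 / δi i
  have hc : ∀ i, c i < 0 := fun i => sub_neg.2 (one_div_lt_one_div_of_lt (hδi i).1 (hδi i).2)
  set g : ℝ → ℝ := fun u => ∑ i, lami i * (1 - exp (c i * u))
  have hg_pos : ∀ u ∈ Ioi (0 : ℝ), 0 < g u := fun u hu =>
    Finset.sum_pos (fun i _ => mul_pos (hlami i)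
      (sub_pos.2 (exp_lt_one_iff.2 (mul_neg_of_neg_of_pos (hc i) hu)))) hne
  have hg : StrictConcaveOn ℝ (Ioi 0) g := StrictConcaveOn.sum hne fun i _ =>
    ((strictConcaveOn_one_sub_exp_mul (hc i).ne).const_mul (hlami i)).subset (subset_univ _)
      (convex_Ioi 0)
  have hlin : ConcaveOn ℝ (Ioi (0 : ℝ)) (fun u => -u / δ) :=
    ⟨convex_Ioi 0, fun x _ y _ a b _ _ _ => le_of_eq (by simp only [smul_eq_mul]; ring)⟩
  have hfactor : ∀ u, h u = exp (-u / δ) * g u := fun u => by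
    simp only [hh, g, Finset.mul_sum]
    refine Finset.sum_congr rfl fun i _ => ?_
    have hexp : exp (-u / δ) * exp (c i * u) = exp (-u / δi i) := by
      rw [← exp_add]; congr 1; simp only [c]; ring
    linear_combination lami i * hexp
  refine ((hg.log hg_pos).add_concaveOn hlin).congr fun u hu => ?_
  simp only [Pi.add_apply, hfactor, log_mul (exp_pos _).ne' (hg_pos u hu).ne', log_exp]
  ring
end

section
/- Let α > 1 and g(x) = x^{α-1}e^{-x}/Γ(α). Then for all x > α - 1, g'(x)·(g''(x)² - g'(x)g'''(x)) < 0. -/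
/-!
Write `g = exp φ` with `φ t = (α - 1) log t - t + const`. Then `g' = g φ'`, `g'' = g (φ'² + φ'')`,
`g''' = g (φ'³ + 3 φ' φ'' + φ''')`, so `g''² - g' g''' = g² (φ''² - φ'² φ'' - φ' φ''')`. With
`c = α - 1 > 0` we have `φ' = c/t - 1`, `φ'' = -c/t²`, `φ''' = 2c/t³`, and the bracket becomes
`(c/t²) (c/t² + φ'² - 2φ'/t)`, which is positive once `φ' < 0`, i.e. `t > c`, where `g' < 0`.
-/

open Real

noncomputable def gammaDens (α t : ℝ) : ℝ := t ^ (α - 1) * Real.exp (-t) / Real.Gamma α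

open Set

section LogDerivative

-- `a`, `b`, `e` play the roles of `φ'`, `φ''`, `φ'''` for `f = exp φ`, without requiring `f > 0`.

variable {f a b e : ℝ → ℝ} {s : Set ℝ}

theorem HasDerivAt.mul_of_hasDerivAt_self_mul {P : ℝ → ℝ} {p x : ℝ}
    (hf : HasDerivAt f (f x * a x) x) (hP : HasDerivAt P p x) :
    HasDerivAt (fun t => f t * P t) (f x * (a x * P x + p)) x :=
  (hf.mul hP).congr_deriv (by ring)

variable (hs : IsOpen s) (hf : ∀ x ∈ s, HasDerivAt f (f x * a x) x)
  (ha : ∀ x ∈ s, HasDerivAt a (b x) x) (hb : ∀ x ∈ s, HasDerivAt b (e x) x)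
include hs hf

theorem deriv_eqOn_self_mul : EqOn (deriv f) (fun x => f x * a x) s :=
  deriv_eqOn hs fun x hx => (hf x hx).hasDerivWithinAt

include ha

theorem deriv_deriv_eqOn_self_mul : EqOn (deriv (deriv f)) (fun x => f x * (a x ^ 2 + b x)) s :=
  ((deriv_eqOn_self_mul hs hf).deriv hs).trans <| deriv_eqOn hs fun x hx =>
    ((hf x hx).mul_of_hasDerivAt_self_mul (ha x hx)).hasDerivWithinAt.congr_deriv (by ring)

include hb

theorem deriv_deriv_deriv_eqOn_self_mul :
    EqOn (deriv (deriv (deriv f))) (fun x => f x * (a x ^ 3 + 3 * a x * b x + e x)) s :=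
  ((deriv_deriv_eqOn_self_mul hs hf ha).deriv hs).trans <| deriv_eqOn hs fun x hx =>
    ((hf x hx).mul_of_hasDerivAt_self_mul
      (((ha x hx).pow 2).add (hb x hx))).hasDerivWithinAt.congr_deriv
        (by simp only [Pi.add_apply, Pi.pow_apply]; ring)

theorem deriv_mul_sq_deriv_deriv_sub {x : ℝ} (hx : x ∈ s) :
    deriv f x * (deriv (deriv f) x ^ 2 - deriv f x * deriv (deriv (deriv f)) x) =
      f x ^ 3 * a x * (b x ^ 2 - a x ^ 2 * b x - a x * e x) := by
  rw [deriv_eqOn_self_mul hs hf hx, deriv_deriv_eqOn_self_mul hs hf ha hx,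
    deriv_deriv_deriv_eqOn_self_mul hs hf ha hb hx]
  ring

end LogDerivative

section GammaDensity

variable {α c t : ℝ}

theorem gammaDens_pos (hα : 0 < α) (ht : 0 < t) : 0 < gammaDens α t :=
  div_pos (mul_pos (rpow_pos_of_pos ht _) (exp_pos _)) (Gamma_pos_of_pos hα)

theorem hasDerivAt_gammaDens (ht : 0 < t) :
    HasDerivAt (gammaDens α) (gammaDens α t * ((α - 1) / t - 1)) t := by
  have h := (((hasDerivAt_rpow_const (p := α - 1) (Or.inl ht.ne')).mul
    (hasDerivAt_neg t).exp).div_const (Gamma α))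
  refine h.congr_deriv ?_
  rw [gammaDens, rpow_sub_one ht.ne']
  field_simp
  ring

theorem hasDerivAt_div_sub_one (ht : 0 < t) :
    HasDerivAt (fun s => c / s - 1) (-c / t ^ 2) t := by
  refine (((hasDerivAt_const t c).div (hasDerivAt_id t) ht.ne').sub_const 1).congr_deriv ?_
  simp [neg_div]

theorem hasDerivAt_neg_div_sq (ht : 0 < t) :
    HasDerivAt (fun s => -c / s ^ 2) (2 * c / t ^ 3) t := by
  refine ((hasDerivAt_const t (-c)).div (hasDerivAt_pow 2 t)
    (pow_ne_zero 2 ht.ne')).congr_deriv ?_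
  field_simp
  ring

theorem sq_neg_div_sq_sub_mul_pos {v : ℝ} (hc : 0 < c) (ht : 0 < t) (hv : v < 0) :
    0 < (-c / t ^ 2) ^ 2 - v ^ 2 * (-c / t ^ 2) - v * (2 * c / t ^ 3) := by
  have hv' : 0 < -v := neg_pos.mpr hv
  have h₁ : 0 < (c / t ^ 2) ^ 2 := by positivity
  have h₂ : 0 ≤ v ^ 2 * (c / t ^ 2) := by positivity
  have h₃ : 0 < -v * (2 * c / t ^ 3) := mul_pos hv' (by positivity)
  rw [neg_div, neg_sq]
  linarith

end GammaDensity

theorem stmt_8 (α : ℝ) (hα : 1 < α) :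
    ∀ x : ℝ, α - 1 < x →
      deriv (gammaDens α) x *
        ((deriv (deriv (gammaDens α)) x) ^ 2 -
          deriv (gammaDens α) x * deriv (deriv (deriv (gammaDens α))) x) < 0 := by
  intro x hx
  have hc : 0 < α - 1 := by linarith
  have hx₀ : 0 < x := hc.trans hx
  rw [deriv_mul_sq_deriv_deriv_sub isOpen_Ioi (fun t ht => hasDerivAt_gammaDens ht)
    (fun t ht => hasDerivAt_div_sub_one ht) (fun t ht => hasDerivAt_neg_div_sq ht) hx₀]
  have hφ' : (α - 1) / x - 1 < 0 := by
    rw [sub_neg, div_lt_one hx₀]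
    exact hx
  exact mul_neg_of_neg_of_pos
    (mul_neg_of_pos_of_neg (pow_pos (gammaDens_pos (by linarith) hx₀) 3) hφ')
    (sq_neg_div_sq_sub_mul_pos hc hx₀ hφ')
end

section
/- Let α ≥ 1, θ ∈ (0,1), X ~ Gamma(α,1), Z ~ Exponential(1) independent, h the density of X + θZ, and g_α the Gamma(α,1) density. Then h'(x)/g'_α(x) is strictly increasing in x on (α-1, ∞). -/
/-!
Put `a = α - 1`, `c = θ⁻¹ - 1`, `K x = x ^ a * exp (c * x)` and `F x = ∫₀ˣ K`. Then
`h' = θ⁻¹ e^{-x/θ} N / Γ(α)` and `g_α' = e^{-x/θ} D / Γ(α)` with `N = K - (1 + c) F` and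
`D = K (a - x) / x`, and `N' = D`. Hence `(h' / g_α')' ∝ D² - N D' = K q ψ / x²`, where
`q x = (c x + a) (x - a) + a` is positive on `(a, ∞)` and `ψ = N + K (x - a)² / q`.
A direct computation gives `ψ' = K a (x - a) ((x - a)² + (x - a) + x) / (x q²) ≥ 0`, so on `(a, ∞)`
`ψ` stays above `lim_{y → a⁺} N y = N a`, which is positive because `σ ^ a e^{-σ} ≤ a ^ a e^{-a}`.
-/

open Real Set

noncomputable def convDens (α θ x : ℝ) : ℝ :=
  ∫ t in (0:ℝ)..x, gammaDens α (x - t) * (θ⁻¹ * Real.exp (-t / θ))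

open Filter Topology

theorem rpow_mul_exp_neg_le {a σ : ℝ} (ha : 0 ≤ a) (hσ : 0 ≤ σ) :
    σ ^ a * exp (-σ) ≤ a ^ a * exp (-a) := by
  rcases ha.eq_or_lt with rfl | ha
  · simpa using hσ
  rcases hσ.eq_or_lt with rfl | hσ
  · rw [Real.zero_rpow ha.ne', zero_mul]; positivity
  rw [Real.rpow_def_of_pos hσ, Real.rpow_def_of_pos ha, ← exp_add, ← exp_add, exp_le_exp]
  have hlog : log (σ / a) ≤ σ / a - 1 := Real.log_le_sub_one_of_pos (by positivity)
  rw [Real.log_div hσ.ne' ha.ne'] at hlog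
  have hmul : a * (σ / a - 1) = σ - a := by field_simp
  nlinarith [mul_le_mul_of_nonneg_left hlog ha.le]

theorem integral_exp_mul {k : ℝ} (hk : k ≠ 0) (a b : ℝ) :
    ∫ σ in a..b, exp (k * σ) = (exp (k * b) - exp (k * a)) / k := by
  rw [intervalIntegral.integral_comp_mul_left (fun y => exp y) hk, integral_exp, smul_eq_mul,
    inv_mul_eq_div]

namespace GammaExpConv

variable (a c : ℝ)

noncomputable def kernel (x : ℝ) : ℝ := x ^ a * exp (c * x)

noncomputable def primitive (x : ℝ) : ℝ := ∫ σ in (0:ℝ)..x, kernel a c σ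

noncomputable def numer (x : ℝ) : ℝ := kernel a c x - (1 + c) * primitive a c x

noncomputable def denom (x : ℝ) : ℝ := kernel a c x * (a - x) / x

def quadratic (x : ℝ) : ℝ := (c * x + a) * (x - a) + a

noncomputable def psi (x : ℝ) : ℝ :=
  numer a c x + kernel a c x * (x - a) ^ 2 / quadratic a c x

variable {a c}

theorem continuous_kernel (ha : 0 ≤ a) : Continuous (kernel a c) :=
  (continuous_id.rpow_const fun _ => Or.inr ha).mul (by fun_prop)

theorem kernel_pos {x : ℝ} (hx : 0 < x) : 0 < kernel a c x := by
  unfold kernel; positivity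

theorem hasDerivAt_kernel {x : ℝ} (hx : 0 < x) :
    HasDerivAt (kernel a c) (kernel a c x * (c + a / x)) x := by
  refine ((Real.hasDerivAt_rpow_const (p := a) (Or.inl hx.ne')).mul
    ((hasDerivAt_id x).const_mul c).exp).congr_deriv ?_
  rw [kernel, Real.rpow_sub_one hx.ne', id]
  field_simp
  ring

theorem hasDerivAt_primitive (ha : 0 ≤ a) (x : ℝ) :
    HasDerivAt (primitive a c) (kernel a c x) x :=
  intervalIntegral.integral_hasDerivAt_right ((continuous_kernel ha).intervalIntegrable 0 x)
    (continuous_kernel ha).stronglyMeasurable.stronglyMeasurableAtFilter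
    (continuous_kernel ha).continuousAt

theorem hasDerivAt_numer (ha : 0 ≤ a) {x : ℝ} (hx : 0 < x) :
    HasDerivAt (numer a c) (denom a c x) x := by
  refine ((hasDerivAt_kernel hx).sub ((hasDerivAt_primitive ha x).const_mul (1 + c))).congr_deriv ?_
  rw [denom]
  field_simp
  ring

theorem continuous_numer (ha : 0 ≤ a) : Continuous (numer a c) :=
  (continuous_kernel ha).sub (continuous_const.mul
    (continuous_iff_continuousAt.2 fun x => (hasDerivAt_primitive ha x).continuousAt))

theorem hasDerivAt_denom {x : ℝ} (hx : 0 < x) :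
    HasDerivAt (denom a c) (-(kernel a c x * quadratic a c x / x ^ 2)) x := by
  refine (((hasDerivAt_kernel hx).mul ((hasDerivAt_id x).const_sub a)).div
    (hasDerivAt_id x) hx.ne').congr_deriv ?_
  simp only [quadratic, id, Pi.mul_apply]
  field_simp
  ring

theorem quadratic_pos (ha : 0 ≤ a) (hc : 0 < c) {x : ℝ} (hx : a < x) :
    0 < quadratic a c x := by
  have : 0 < c * x := mul_pos hc (by linarith)
  unfold quadratic
  nlinarith

theorem hasDerivAt_quadratic (x : ℝ) :
    HasDerivAt (quadratic a c) (c * (x - a) + (c * x + a)) x := by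
  refine ((((hasDerivAt_id' x).const_mul c).add_const a).mul
    ((hasDerivAt_id' x).sub_const a)).add_const a |>.congr_deriv ?_
  ring

theorem hasDerivAt_psi (ha : 0 ≤ a) (hc : 0 < c) {x : ℝ} (hx : a < x) :
    HasDerivAt (psi a c)
      (kernel a c x * (a * (x - a) * ((x - a) ^ 2 + (x - a) + x)) / (x * quadratic a c x ^ 2))
      x := by
  have hx0 : 0 < x := by linarith
  have hq := (quadratic_pos ha hc hx).ne'
  refine ((hasDerivAt_numer ha hx0).add (((hasDerivAt_kernel hx0).mul
    (((hasDerivAt_id x).sub_const a).pow 2)).div (hasDerivAt_quadratic x) hq)).congr_deriv ?_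
  simp only [denom, id, Pi.mul_apply, Pi.pow_apply]
  field_simp
  unfold quadratic
  ring

theorem monotoneOn_psi (ha : 0 ≤ a) (hc : 0 < c) : MonotoneOn (psi a c) (Ioi a) := by
  have hderiv := fun x (hx : x ∈ Ioi a) => hasDerivAt_psi (c := c) ha hc hx
  refine monotoneOn_of_deriv_nonneg (convex_Ioi a)
    (fun x hx => (hderiv x hx).continuousAt.continuousWithinAt) ?_ ?_ <;> rw [interior_Ioi]
  · exact fun x hx => (hderiv x hx).differentiableAt.differentiableWithinAt
  intro x hx
  rw [(hderiv x hx).deriv]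
  have hx0 : 0 < x := by linarith [mem_Ioi.mp hx]
  have hxa : 0 ≤ x - a := by linarith [mem_Ioi.mp hx]
  exact div_nonneg (mul_nonneg (kernel_pos hx0).le (by positivity))
    (mul_nonneg hx0.le (sq_nonneg _))

theorem mul_primitive_self_le (ha : 0 ≤ a) (hc : 0 < 1 + c) :
    (1 + c) * primitive a c a ≤ a ^ a * (exp (c * a) - exp (-a)) := by
  have hbound : ∀ σ ∈ Icc 0 a, kernel a c σ ≤ a ^ a * exp (-a) * exp ((1 + c) * σ) := by
    intro σ hσ
    calc kernel a c σ = σ ^ a * exp (-σ) * exp ((1 + c) * σ) := by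
          rw [kernel, mul_assoc, ← exp_add]; ring_nf
      _ ≤ a ^ a * exp (-a) * exp ((1 + c) * σ) :=
          mul_le_mul_of_nonneg_right (rpow_mul_exp_neg_le ha hσ.1) (exp_pos _).le
  have hcont : Continuous fun σ => a ^ a * exp (-a) * exp ((1 + c) * σ) := by fun_prop
  have hint := intervalIntegral.integral_mono_on (μ := MeasureTheory.volume) ha
    ((continuous_kernel ha).intervalIntegrable 0 a)
    (hcont.intervalIntegrable 0 a) hbound
  rw [intervalIntegral.integral_const_mul, integral_exp_mul hc.ne', mul_zero, exp_zero] at hint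
  calc (1 + c) * primitive a c a
      ≤ (1 + c) * (a ^ a * exp (-a) * ((exp ((1 + c) * a) - 1) / (1 + c))) := by gcongr; exact hint
    _ = a ^ a * (exp (c * a) - exp (-a)) := by
      have hexp : exp (-a) * exp ((1 + c) * a) = exp (c * a) := by rw [← exp_add]; ring_nf
      field_simp
      linear_combination a ^ a * hexp

theorem numer_self_pos (ha : 0 ≤ a) (hc : 0 < 1 + c) : 0 < numer a c a := by
  have hpow : 0 < a ^ a := by
    rcases ha.eq_or_lt with rfl | ha
    · simp
    · positivity
  have := mul_primitive_self_le ha hc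
  have : 0 < a ^ a * exp (-a) := by positivity
  unfold numer kernel
  nlinarith

theorem numer_le_psi (ha : 0 ≤ a) (hc : 0 < c) {x : ℝ} (hx : a < x) :
    numer a c x ≤ psi a c x :=
  le_add_of_nonneg_right <| div_nonneg
    (mul_nonneg (kernel_pos (x := x) (by linarith)).le (sq_nonneg _)) (quadratic_pos ha hc hx).le

-- `psi` is monotone only on the open ray (for `a = 0` its last term is `0 / 0` at `a`),
-- so its lower bound `numer a c a` is reached as a limit.
theorem psi_pos (ha : 0 ≤ a) (hc : 0 < c) {x : ℝ} (hx : a < x) : 0 < psi a c x := by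
  have hlim : Tendsto (numer a c) (𝓝[>] a) (𝓝 (numer a c a)) :=
    (continuous_numer ha).continuousAt.continuousWithinAt
  refine (numer_self_pos ha (by linarith)).trans_le (le_of_tendsto hlim ?_)
  filter_upwards [Ioc_mem_nhdsGT hx] with y hy
  exact (numer_le_psi ha hc hy.1).trans (monotoneOn_psi ha hc hy.1 hx hy.2)

theorem denom_ne_zero {x : ℝ} (hx : a < x) (hx0 : 0 < x) : denom a c x ≠ 0 :=
  div_ne_zero (mul_ne_zero (kernel_pos hx0).ne' (by linarith)) hx0.ne'

theorem hasDerivAt_numer_div_denom (ha : 0 ≤ a) (hc : 0 < c) {x : ℝ} (hx : a < x) :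
    HasDerivAt (fun y => numer a c y / denom a c y)
      (kernel a c x * quadratic a c x * psi a c x / (x ^ 2 * denom a c x ^ 2)) x := by
  have hx0 : 0 < x := by linarith
  have hq := (quadratic_pos ha hc hx).ne'
  refine ((hasDerivAt_numer ha hx0).div (hasDerivAt_denom hx0)
    (denom_ne_zero hx hx0)).congr_deriv ?_
  rw [psi, denom]
  field_simp
  ring

theorem strictMonoOn_numer_div_denom (ha : 0 ≤ a) (hc : 0 < c) :
    StrictMonoOn (fun x => numer a c x / denom a c x) (Ioi a) := by
  have hderiv := fun x (hx : x ∈ Ioi a) => hasDerivAt_numer_div_denom (c := c) ha hc hx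
  refine strictMonoOn_of_deriv_pos (convex_Ioi a)
    (fun x hx => (hderiv x hx).continuousAt.continuousWithinAt) fun x hx => ?_
  rw [interior_Ioi] at hx
  have hx0 : 0 < x := by linarith [mem_Ioi.mp hx]
  rw [(hderiv x hx).deriv]
  have := kernel_pos (a := a) (c := c) hx0
  have := quadratic_pos ha hc hx
  have := psi_pos ha hc hx
  have := denom_ne_zero (c := c) hx hx0
  positivity

end GammaExpConv

open GammaExpConv

theorem gammaDens_eq_kernel (α : ℝ) :
    gammaDens α = fun x => kernel (α - 1) (-1) x / Gamma α := by
  ext x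
  simp [gammaDens, kernel]

theorem convDens_eq_primitive {θ : ℝ} (hθ : 0 < θ) (α x : ℝ) :
    convDens α θ x = θ⁻¹ * exp (-(x / θ)) * primitive (α - 1) (θ⁻¹ - 1) x / Gamma α := by
  have hintegrand : ∀ t, gammaDens α (x - t) * (θ⁻¹ * exp (-t / θ))
      = θ⁻¹ * exp (-(x / θ)) / Gamma α * kernel (α - 1) (θ⁻¹ - 1) (x - t) := by
    intro t
    have hexp : exp (-(x - t)) * exp (-t / θ) = exp (-(x / θ)) * exp ((θ⁻¹ - 1) * (x - t)) := by
      rw [← exp_add, ← exp_add]; congr 1; field_simp; ring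
    simp only [gammaDens, kernel]
    linear_combination ((x - t) ^ (α - 1) * θ⁻¹ / Gamma α) * hexp
  rw [convDens, intervalIntegral.integral_congr fun t _ => hintegrand t,
    intervalIntegral.integral_const_mul,
    intervalIntegral.integral_comp_sub_left (fun t => kernel (α - 1) (θ⁻¹ - 1) t) x,
    sub_self, sub_zero, primitive]
  ring

theorem hasDerivAt_convDens {α θ : ℝ} (hα : 1 ≤ α) (hθ : 0 < θ) (x : ℝ) :
    HasDerivAt (convDens α θ)
      (θ⁻¹ * exp (-(x / θ)) * numer (α - 1) (θ⁻¹ - 1) x / Gamma α) x := by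
  rw [show convDens α θ = _ from funext (convDens_eq_primitive hθ α)]
  refine ((((hasDerivAt_id' x).div_const θ).fun_neg.exp.const_mul θ⁻¹).mul
    (hasDerivAt_primitive (by linarith) x)).div_const (Gamma α) |>.congr_deriv ?_
  rw [numer]
  ring

theorem deriv_convDens_div_deriv_gammaDens {α θ : ℝ} (hα : 1 ≤ α) (hθ : 0 < θ) {x : ℝ}
    (hx : α - 1 < x) :
    deriv (convDens α θ) x / deriv (gammaDens α) x
      = θ⁻¹ * (numer (α - 1) (θ⁻¹ - 1) x / denom (α - 1) (θ⁻¹ - 1) x) := by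
  have hx0 : 0 < x := by linarith
  rw [(hasDerivAt_convDens hα hθ x).deriv, gammaDens_eq_kernel,
    ((hasDerivAt_kernel hx0).div_const (Gamma α)).deriv]
  have hexp : exp (-1 * x) = exp (-(x / θ)) * exp ((θ⁻¹ - 1) * x) := by
    rw [← exp_add]; congr 1; field_simp; ring
  have hΓ : Gamma α ≠ 0 := (Gamma_pos_of_pos (by linarith)).ne'
  have hxa : α - 1 - x ≠ 0 := by linarith
  have hfac : -1 + (α - 1) / x = (α - 1 - x) / x := by field_simp; ring
  simp only [denom, kernel, hexp, hfac]
  generalize numer (α - 1) (θ⁻¹ - 1) x = N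
  field_simp

theorem stmt_9 (α θ : ℝ) (hα : 1 ≤ α) (hθ : θ ∈ Ioo (0:ℝ) 1) :
    StrictMonoOn (fun x => deriv (convDens α θ) x / deriv (gammaDens α) x)
      (Ioi (α - 1)) := by
  obtain ⟨hθ0, hθ1⟩ := hθ
  have hc : 0 < θ⁻¹ - 1 := sub_pos.2 ((one_lt_inv₀ hθ0).2 hθ1)
  intro x hx y hy hxy
  simp only [deriv_convDens_div_deriv_gammaDens hα hθ0 hx,
    deriv_convDens_div_deriv_gammaDens hα hθ0 hy]
  exact mul_lt_mul_of_pos_left (strictMonoOn_numer_div_denom (by linarith) hc hx hy hxy)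
    (inv_pos.2 hθ0)
end

section
/- Let α ≥ 2, θ ∈ (0,1), X ~ Gamma(α,1), Z ~ Exponential(1) independent, h the density of X + θZ, and g_α the Gamma(α,1) density. Then h'(x)/g'_α(x) is strictly increasing in x on (0, α-1). -/
open Real Set

/-!
Write `h = g_α ⋆ k` with `k t = θ⁻¹ e^{-t/θ}`. Since `g_α 0 = 0`, differentiating the convolution
gives `h' = g_α' ⋆ k`, so `h'(x) / g_α'(x) = ∫₀ˣ (g_α'(x - t) / g_α'(x)) k t dt`. On `(0, α - 1)`,
`g_α'(x) = x^{α-2} (α - 1 - x) e^{-x} / Γ(α) > 0`, and for fixed `t` each of the three factors of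
`g_α'(x - t) / g_α'(x)` is nondecreasing in `x`, the middle one strictly. Moreover the domain of
integration grows with `x` while the integrand stays nonnegative.
-/

section ExpConvolution

variable {θ : ℝ}

noncomputable def expKernel (θ t : ℝ) : ℝ := θ⁻¹ * exp (-t / θ)

lemma continuous_expKernel (θ : ℝ) : Continuous (expKernel θ) := by
  unfold expKernel; fun_prop

lemma expKernel_pos (hθ : 0 < θ) (t : ℝ) : 0 < expKernel θ t := by
  unfold expKernel; positivity

lemma integral_comp_sub_mul_expKernel (g : ℝ → ℝ) (x : ℝ) :
    ∫ t in (0:ℝ)..x, g (x - t) * expKernel θ t =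
      θ⁻¹ * exp (-x / θ) * ∫ s in (0:ℝ)..x, exp (s / θ) * g s := by
  have hsub := intervalIntegral.integral_comp_sub_left
    (fun s => g s * expKernel θ (x - s)) (a := 0) (b := x) x
  simp only [sub_sub_cancel, sub_self, sub_zero] at hsub
  rw [hsub, ← intervalIntegral.integral_const_mul]
  refine intervalIntegral.integral_congr fun s _ => ?_
  simp only [expKernel]
  rw [show -(x - s) / θ = -x / θ + s / θ by ring, exp_add]
  ring

lemma hasDerivAt_integral_comp_sub_mul_expKernel {g g' : ℝ → ℝ}
    (hg : ∀ x, HasDerivAt g (g' x) x) (hg' : Continuous g') (hg0 : g 0 = 0) (x : ℝ) :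
    HasDerivAt (fun x => ∫ t in (0:ℝ)..x, g (x - t) * expKernel θ t)
      (∫ t in (0:ℝ)..x, g' (x - t) * expKernel θ t) x := by
  have hgc : Continuous g := continuous_iff_continuousAt.2 fun x => (hg x).continuousAt
  have hG : Continuous fun s => exp (s / θ) * g s := by fun_prop
  have hexp (s : ℝ) : HasDerivAt (fun u => exp (u / θ)) (exp (s / θ) * θ⁻¹) s := by
    simpa [div_eq_mul_inv] using ((hasDerivAt_id s).div_const θ).exp
  have hibp : ∫ s in (0:ℝ)..x, exp (s / θ) * g' s =
      exp (x / θ) * g x - θ⁻¹ * ∫ s in (0:ℝ)..x, exp (s / θ) * g s := by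
    rw [intervalIntegral.integral_mul_deriv_eq_deriv_mul (fun s _ => hexp s) (fun s _ => hg s)
      ((by fun_prop : Continuous _).intervalIntegrable _ _) (hg'.intervalIntegrable _ _),
      hg0, mul_zero, sub_zero, ← intervalIntegral.integral_const_mul]
    congr 1
    exact intervalIntegral.integral_congr fun s _ => by ring
  have hF : HasDerivAt (fun u => ∫ s in (0:ℝ)..u, exp (s / θ) * g s) (exp (x / θ) * g x) x :=
    intervalIntegral.integral_hasDerivAt_right (hG.intervalIntegrable 0 x)
      (hG.stronglyMeasurableAtFilter _ _) hG.continuousAt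
  have hE := ((hasDerivAt_neg x).div_const θ).exp.const_mul θ⁻¹
  simp_rw [integral_comp_sub_mul_expKernel]
  refine (hE.mul hF).congr_deriv ?_
  rw [hibp]
  ring

end ExpConvolution

/-- `hφ_shift` says that `φ (x - t) / φ x` is strictly increasing in `x`. -/
lemma strictMonoOn_integral_comp_sub_mul_div {φ k : ℝ → ℝ} {c : ℝ}
    (hφ : Continuous φ) (hk : Continuous k) (hk_pos : ∀ t, 0 < k t)
    (hφ_pos : ∀ x ∈ Ioo 0 c, 0 < φ x)
    (hφ_shift : ∀ t a b, 0 < t → t < a → a < b → b < c → φ (a - t) * φ b < φ (b - t) * φ a) :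
    StrictMonoOn (fun x => (∫ t in (0:ℝ)..x, φ (x - t) * k t) / φ x) (Ioo 0 c) := by
  intro a ha b hb hab
  have hc : 0 < c := ha.1.trans ha.2
  have hφ_nonneg : Icc 0 c ⊆ {x | 0 ≤ φ x} := by
    rw [← closure_Ioo hc.ne]
    exact (isClosed_le continuous_const hφ).closure_subset_iff.2 fun x hx => (hφ_pos x hx).le
  have hint (x : ℝ) : Continuous fun t => φ (x - t) * k t := by fun_prop
  have hlt : (∫ t in (0:ℝ)..a, φ (a - t) * k t) * φ b < φ a * ∫ t in (0:ℝ)..a, φ (b - t) * k t := by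
    rw [← intervalIntegral.integral_mul_const, ← intervalIntegral.integral_const_mul, ← sub_pos,
      ← intervalIntegral.integral_sub ((by fun_prop : Continuous _).intervalIntegrable _ _)
        ((by fun_prop : Continuous _).intervalIntegrable _ _)]
    refine intervalIntegral.intervalIntegral_pos_of_pos_on
      ((by fun_prop : Continuous _).intervalIntegrable _ _) (fun t ht => ?_) ha.1
    have := hφ_shift t a b ht.1 ht.2 hab hb.2
    nlinarith [hk_pos t]
  have hle : ∫ t in (0:ℝ)..a, φ (b - t) * k t ≤ ∫ t in (0:ℝ)..b, φ (b - t) * k t := by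
    refine intervalIntegral.integral_mono_interval le_rfl ha.1.le hab.le ?_
      ((hint b).intervalIntegrable _ _)
    refine (MeasureTheory.ae_restrict_mem measurableSet_Ioc).mono fun t ht => ?_
    exact mul_nonneg (hφ_nonneg ⟨by linarith [ht.2], by linarith [ht.1, hb.2]⟩) (hk_pos t).le
  rw [div_lt_div_iff₀ (hφ_pos a ha) (hφ_pos b hb)]
  calc (∫ t in (0:ℝ)..a, φ (a - t) * k t) * φ b
      < φ a * ∫ t in (0:ℝ)..a, φ (b - t) * k t := hlt
    _ ≤ φ a * ∫ t in (0:ℝ)..b, φ (b - t) * k t := by gcongr; exact (hφ_pos a ha).le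
    _ = _ := mul_comm _ _

section GammaDensity

variable {α : ℝ}

noncomputable def gammaDensDeriv (α x : ℝ) : ℝ :=
  ((α - 1) * x ^ (α - 2) - x ^ (α - 1)) * exp (-x) / Gamma α

lemma gammaDens_zero (hα : 1 < α) : gammaDens α 0 = 0 := by
  simp [gammaDens, zero_rpow (by linarith : α - 1 ≠ 0)]

lemma hasDerivAt_gammaDens_s10 (hα : 2 ≤ α) (x : ℝ) :
    HasDerivAt (gammaDens α) (gammaDensDeriv α x) x := by
  have hpow : HasDerivAt (fun t : ℝ => t ^ (α - 1)) ((α - 1) * x ^ (α - 1 - 1)) x :=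
    hasDerivAt_rpow_const (Or.inr (by linarith))
  refine ((hpow.mul (hasDerivAt_neg x).exp).div_const (Gamma α)).congr_deriv ?_
  rw [gammaDensDeriv, show α - 1 - 1 = α - 2 by ring]
  ring

lemma continuous_gammaDensDeriv (hα : 2 ≤ α) : Continuous (gammaDensDeriv α) := by
  have h1 : Continuous fun t : ℝ => t ^ (α - 1) := continuous_rpow_const (by linarith)
  have h2 : Continuous fun t : ℝ => t ^ (α - 2) := continuous_rpow_const (by linarith)
  unfold gammaDensDeriv
  fun_prop

lemma gammaDensDeriv_eq {x : ℝ} (hx : 0 < x) :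
    gammaDensDeriv α x = x ^ (α - 2) * (α - 1 - x) * exp (-x) / Gamma α := by
  rw [gammaDensDeriv, show α - 1 = α - 2 + 1 by ring, rpow_add hx, rpow_one]
  ring

lemma gammaDensDeriv_pos (hα : 0 < α) {x : ℝ} (hx : 0 < x) (hxα : x < α - 1) :
    0 < gammaDensDeriv α x := by
  have := Gamma_pos_of_pos hα
  have : 0 < α - 1 - x := by linarith
  rw [gammaDensDeriv_eq hx]
  positivity

lemma gammaDensDeriv_sub_mul_lt (hα : 2 ≤ α) {t a b : ℝ} (ht : 0 < t) (hta : t < a) (hab : a < b)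
    (hbα : b < α - 1) :
    gammaDensDeriv α (a - t) * gammaDensDeriv α b <
      gammaDensDeriv α (b - t) * gammaDensDeriv α a := by
  have ha : 0 < a := ht.trans hta
  have hb : 0 < b := ha.trans hab
  have hat : 0 < a - t := by linarith
  have hbt : 0 < b - t := by linarith
  have hΓ := Gamma_pos_of_pos (by linarith : 0 < α)
  have hpow : (a - t) ^ (α - 2) * b ^ (α - 2) ≤ (b - t) ^ (α - 2) * a ^ (α - 2) := by
    rw [← mul_rpow hat.le hb.le, ← mul_rpow hbt.le ha.le]
    exact rpow_le_rpow (by positivity) (by nlinarith) (by linarith)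
  have hlin : (α - 1 - (a - t)) * (α - 1 - b) < (α - 1 - (b - t)) * (α - 1 - a) := by nlinarith
  have hexp : exp (-(a - t)) * exp (-b) = exp (-(b - t)) * exp (-a) := by
    rw [← exp_add, ← exp_add]; ring_nf
  have hfactors : (a - t) ^ (α - 2) * b ^ (α - 2) * ((α - 1 - (a - t)) * (α - 1 - b)) <
      (b - t) ^ (α - 2) * a ^ (α - 2) * ((α - 1 - (b - t)) * (α - 1 - a)) := by
    have : 0 < (a - t) ^ (α - 2) * b ^ (α - 2) := by positivity
    have : 0 < (α - 1 - (a - t)) * (α - 1 - b) := mul_pos (by linarith) (by linarith)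
    nlinarith
  rw [gammaDensDeriv_eq hat, gammaDensDeriv_eq hb, gammaDensDeriv_eq hbt, gammaDensDeriv_eq ha,
    div_mul_div_comm, div_mul_div_comm, div_lt_div_iff_of_pos_right (by positivity)]
  calc (a - t) ^ (α - 2) * (α - 1 - (a - t)) * exp (-(a - t)) * (b ^ (α - 2) * (α - 1 - b) * exp (-b))
      = (a - t) ^ (α - 2) * b ^ (α - 2) * ((α - 1 - (a - t)) * (α - 1 - b)) *
          (exp (-(a - t)) * exp (-b)) := by ring
    _ < (b - t) ^ (α - 2) * a ^ (α - 2) * ((α - 1 - (b - t)) * (α - 1 - a)) *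
          (exp (-(a - t)) * exp (-b)) := mul_lt_mul_of_pos_right hfactors (by positivity)
    _ = _ := by rw [hexp]; ring

end GammaDensity

theorem stmt_10 (α θ : ℝ) (hα : 2 ≤ α) (hθ : θ ∈ Ioo (0:ℝ) 1) :
    StrictMonoOn (fun x => deriv (convDens α θ) x / deriv (gammaDens α) x)
      (Ioo (0:ℝ) (α - 1)) := by
  have hconv : deriv (convDens α θ) = fun x => ∫ t in (0:ℝ)..x,
      gammaDensDeriv α (x - t) * expKernel θ t := funext fun x =>
    (hasDerivAt_integral_comp_sub_mul_expKernel (hasDerivAt_gammaDens_s10 hα)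
      (continuous_gammaDensDeriv hα) (gammaDens_zero (by linarith)) x).deriv
  have hgamma : deriv (gammaDens α) = gammaDensDeriv α :=
    funext fun x => (hasDerivAt_gammaDens_s10 hα x).deriv
  rw [hconv, hgamma]
  exact strictMonoOn_integral_comp_sub_mul_div (continuous_gammaDensDeriv hα)
    (continuous_expKernel θ) (expKernel_pos hθ.1)
    (fun x hx => gammaDensDeriv_pos (by linarith) hx.1 hx.2)
    (fun t a b ht hta hab hbα => gammaDensDeriv_sub_mul_lt hα ht hta hab hbα)
end

section
/- Suppose n = 2 and X₁, X₂ are iid Gamma(α,1). If θ₁θ₂ = η₁η₂ with θ₁ ≤ θ₂, η₁ ≤ η₂ and θ₁ ≤ η₁ (i.e., (log η₁, log η₂) is majorized by (log θ₁, log θ₂)), then P(θ₁X₁ + θ₂X₂ ≤ x) ≤ P(η₁X₁ + η₂X₂ ≤ x) for all x > 0. -/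
/-!
Put `k = η₁ / θ₂ = θ₁ / η₂ ≤ 1`. The area-preserving involution `R (p₁, p₂) = (p₂ / k, k p₁)`
of the plane turns `η₁ p₁ + η₂ p₂` into `θ₁ p₁ + θ₂ p₂` and back, so it exchanges the two
pieces `Sθ \ Sη` and `Sη \ Sθ` of the symmetric difference of the half-planes
`Sθ = {θ₁ p₁ + θ₂ p₂ ≤ x}` and `Sη = {η₁ p₁ + η₂ p₂ ≤ x}`. The joint gamma density, proportional
to `(p₁ p₂)^(α-1) e^{-(p₁ + p₂)}`, depends only on the product and the sum of the coordinates;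
`R` preserves the product, and on `Sη \ Sθ` we have `k p₁ ≤ p₂`, hence
`p₁ + p₂ ≤ k p₁ + p₂ / k`. So the density on `Sη \ Sθ` dominates its pull-back by `R`, which
gives `P(Sθ \ Sη) ≤ P(Sη \ Sθ)`.
-/

open MeasureTheory ProbabilityTheory Function
open scoped ENNReal

section Measure

variable {α : Type*} [MeasurableSpace α] {μ : Measure α}

theorem measure_le_of_measure_diff_le {s t : Set α} (hs : MeasurableSet s) (ht : MeasurableSet t)
    (h : μ (s \ t) ≤ μ (t \ s)) : μ s ≤ μ t := by
  rw [← measure_inter_add_sdiff s ht, ← measure_inter_add_sdiff t hs, Set.inter_comm]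
  gcongr

theorem withDensity_preimage_le {T : α → α} (hT : MeasurePreserving T μ μ) (hinv : Involutive T)
    {f : α → ℝ≥0∞} (hf : Measurable f) {s : Set α} (hs : MeasurableSet s)
    (hfs : ∀ x ∈ s, f (T x) ≤ f x) :
    μ.withDensity f (T ⁻¹' s) ≤ μ.withDensity f s := by
  rw [withDensity_apply _ (hT.measurable hs), withDensity_apply _ hs]
  calc ∫⁻ x in T ⁻¹' s, f x ∂μ = ∫⁻ x in T ⁻¹' s, (f ∘ T) (T x) ∂μ := by
        simp only [comp_apply, hinv _]
    _ = ∫⁻ x in s, f (T x) ∂μ := hT.setLIntegral_comp_preimage hs (hf.comp hT.measurable)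
    _ ≤ ∫⁻ x in s, f x ∂μ := setLIntegral_mono' hs hfs

end Measure

theorem ProbabilityTheory.IndepFun.measure_preimage_eq_prod {Ω β γ : Type*} [MeasurableSpace Ω]
    [MeasurableSpace β] [MeasurableSpace γ] {μ : Measure Ω} [IsFiniteMeasure μ]
    {X : Ω → β} {Y : Ω → γ} (hX : Measurable X) (hY : Measurable Y) (h : IndepFun X Y μ)
    {s : Set (β × γ)} (hs : MeasurableSet s) :
    μ ((fun ω ↦ (X ω, Y ω)) ⁻¹' s) = (μ.map X).prod (μ.map Y) s := by
  rw [← (indepFun_iff_map_prod_eq_prod_map_map hX.aemeasurable hY.aemeasurable).mp h,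
    Measure.map_apply (hX.prodMk hY) hs]

theorem measurePreserving_prodMap_mul_mul {a b : ℝ} (hab : |a * b| = 1) :
    MeasurePreserving (Prod.map (a * ·) (b * ·)) (volume : Measure (ℝ × ℝ)) volume := by
  have hab₀ : a * b ≠ 0 := by
    rintro h
    simp [h] at hab
  have ha : a ≠ 0 := left_ne_zero_of_mul hab₀
  have hb : b ≠ 0 := right_ne_zero_of_mul hab₀
  refine ⟨(measurable_const_mul a).prodMap (measurable_const_mul b), ?_⟩
  rw [Measure.volume_eq_prod, ← Measure.map_prod_map _ _ (measurable_const_mul a)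
    (measurable_const_mul b), Real.map_volume_mul_left ha, Real.map_volume_mul_left hb,
    Measure.prod_smul_left, Measure.prod_smul_right, smul_smul,
    ← ENNReal.ofReal_mul (abs_nonneg _), ← abs_mul, ← mul_inv, abs_inv, hab, inv_one,
    ENNReal.ofReal_one, one_smul]

theorem measurePreserving_inv_mul_swap_mul {k : ℝ} (hk : k ≠ 0) :
    MeasurePreserving (fun p : ℝ × ℝ ↦ (k⁻¹ * p.2, k * p.1)) volume volume :=
  (measurePreserving_prodMap_mul_mul (by rw [inv_mul_cancel₀ hk, abs_one])).comp
    (Measure.measurePreserving_swap (μ := volume) (ν := volume))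

theorem involutive_inv_mul_swap_mul {k : ℝ} (hk : k ≠ 0) :
    Involutive fun p : ℝ × ℝ ↦ (k⁻¹ * p.2, k * p.1) := fun p ↦ by
  ext <;> field_simp

section Gamma

variable {a r : ℝ}

theorem gammaPDF_of_nonneg_eq_mul {x : ℝ} (hx : 0 ≤ x) :
    gammaPDF a r x = ENNReal.ofReal (r ^ a / Real.Gamma a) *
      ENNReal.ofReal (x ^ (a - 1) * Real.exp (-(r * x))) := by
  rw [gammaPDF_of_nonneg hx, mul_assoc, ENNReal.ofReal_mul' (by positivity)]

theorem gammaPDF_mul_le_of_mul_eq_of_add_le (hr : 0 ≤ r) {u v s t : ℝ} (hu : 0 ≤ u)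
    (hv : 0 ≤ v) (hs : 0 ≤ s) (ht : 0 ≤ t) (hmul : u * v = s * t) (hadd : s + t ≤ u + v) :
    gammaPDF a r u * gammaPDF a r v ≤ gammaPDF a r s * gammaPDF a r t := by
  have kernel_eq {x y : ℝ} (hx : 0 ≤ x) (hy : 0 ≤ y) :
      x ^ (a - 1) * Real.exp (-(r * x)) * (y ^ (a - 1) * Real.exp (-(r * y))) =
        (x * y) ^ (a - 1) * Real.exp (-(r * (x + y))) := by
    rw [Real.mul_rpow hx hy, mul_add, neg_add, Real.exp_add]
    ring
  have kernel_nonneg {x : ℝ} (hx : 0 ≤ x) : 0 ≤ x ^ (a - 1) * Real.exp (-(r * x)) :=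
    mul_nonneg (Real.rpow_nonneg hx _) (Real.exp_pos _).le
  rw [gammaPDF_of_nonneg_eq_mul hu, gammaPDF_of_nonneg_eq_mul hv, gammaPDF_of_nonneg_eq_mul hs,
    gammaPDF_of_nonneg_eq_mul ht]
  set c := ENNReal.ofReal (r ^ a / Real.Gamma a)
  calc c * ENNReal.ofReal (u ^ (a - 1) * Real.exp (-(r * u))) *
        (c * ENNReal.ofReal (v ^ (a - 1) * Real.exp (-(r * v))))
      = c * c * ENNReal.ofReal ((u * v) ^ (a - 1) * Real.exp (-(r * (u + v)))) := by
        rw [← kernel_eq hu hv, ENNReal.ofReal_mul (kernel_nonneg hu)]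
        ring
    _ ≤ c * c * ENNReal.ofReal ((s * t) ^ (a - 1) * Real.exp (-(r * (s + t)))) := by
        rw [hmul]
        gcongr
    _ = c * ENNReal.ofReal (s ^ (a - 1) * Real.exp (-(r * s))) *
        (c * ENNReal.ofReal (t ^ (a - 1) * Real.exp (-(r * t)))) := by
        rw [← kernel_eq hs ht, ENNReal.ofReal_mul (kernel_nonneg hs)]
        ring

theorem gammaPDF_inv_mul_mul_le (hr : 0 ≤ r) {k : ℝ} (hk₀ : 0 < k) (hk₁ : k ≤ 1) {p : ℝ × ℝ}
    (hp : k * p.1 ≤ p.2) :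
    gammaPDF a r (k⁻¹ * p.2) * gammaPDF a r (k * p.1) ≤ gammaPDF a r p.1 * gammaPDF a r p.2 := by
  rcases lt_or_ge p.1 0 with h₁ | h₁
  · rw [gammaPDF_of_neg (mul_neg_of_pos_of_neg hk₀ h₁), mul_zero]
    exact zero_le
  have h₂ : 0 ≤ p.2 := (mul_nonneg hk₀.le h₁).trans hp
  refine gammaPDF_mul_le_of_mul_eq_of_add_le hr (by positivity) (by positivity) h₁ h₂
    (by field_simp) (sub_nonneg.mp ?_)
  have hdiff : k⁻¹ * p.2 + k * p.1 - (p.1 + p.2) = k⁻¹ * ((1 - k) * (p.2 - k * p.1)) := by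
    field_simp
    ring
  rw [hdiff]
  exact mul_nonneg (inv_nonneg.mpr hk₀.le) (mul_nonneg (sub_nonneg.mpr hk₁) (sub_nonneg.mpr hp))

@[fun_prop]
theorem measurable_gammaPDF (a r : ℝ) : Measurable (gammaPDF a r) :=
  (measurable_gammaPDFReal a r).ennreal_ofReal

theorem gammaMeasure_prod_eq_withDensity (a r : ℝ) :
    (gammaMeasure a r).prod (gammaMeasure a r) =
      volume.withDensity fun p : ℝ × ℝ ↦ gammaPDF a r p.1 * gammaPDF a r p.2 :=
  prod_withDensity (measurable_gammaPDF a r) (measurable_gammaPDF a r)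

end Gamma

theorem gammaMeasure_prod_halfPlane_le {a r θ₁ θ₂ η₁ η₂ : ℝ} (hr : 0 ≤ r) (hθ₁ : 0 < θ₁)
    (hη₁ : 0 < η₁) (hη : η₁ ≤ η₂) (hθη : θ₁ ≤ η₁) (hprod : θ₁ * θ₂ = η₁ * η₂) (x : ℝ) :
    (gammaMeasure a r).prod (gammaMeasure a r) {p | θ₁ * p.1 + θ₂ * p.2 ≤ x} ≤
      (gammaMeasure a r).prod (gammaMeasure a r) {p | η₁ * p.1 + η₂ * p.2 ≤ x} := by
  have hθ₂ : 0 < θ₂ := pos_of_mul_pos_right (hprod ▸ mul_pos hη₁ (hη₁.trans_le hη)) hθ₁.le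
  have hηθ₂ : η₂ ≤ θ₂ := le_of_mul_le_mul_left (hprod ▸ by gcongr; linarith) hθ₁
  set k := η₁ / θ₂
  have hk₀ : 0 < k := div_pos hη₁ hθ₂
  have hk₁ : k ≤ 1 := (div_le_one hθ₂).mpr (hη.trans hηθ₂)
  have hkθ₂ : k * θ₂ = η₁ := div_mul_cancel₀ _ hθ₂.ne'
  have hkη₂ : k * η₂ = θ₁ := by
    rw [div_mul_eq_mul_div, ← hprod, mul_div_cancel_right₀ _ hθ₂.ne']
  set Sθ : Set (ℝ × ℝ) := {p | θ₁ * p.1 + θ₂ * p.2 ≤ x}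
  set Sη : Set (ℝ × ℝ) := {p | η₁ * p.1 + η₂ * p.2 ≤ x}
  have hSθ : MeasurableSet Sθ := measurableSet_le (by fun_prop) measurable_const
  have hSη : MeasurableSet Sη := measurableSet_le (by fun_prop) measurable_const
  set R : ℝ × ℝ → ℝ × ℝ := fun p ↦ (k⁻¹ * p.2, k * p.1)
  have hpre : Sθ \ Sη = R ⁻¹' (Sη \ Sθ) := by
    ext p
    simp only [Sθ, Sη, R, Set.mem_sdiff, Set.mem_preimage, Set.mem_ofPred_eq]
    rw [← hkθ₂, ← hkη₂]
    field_simp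
    ring_nf
  have hdomin : ∀ q ∈ Sη \ Sθ, k * q.1 ≤ q.2 := by
    rintro q ⟨hqη, hqθ⟩
    have hgap : 0 < (θ₂ - η₂) * (q.2 - k * q.1) := by
      simp only [Sθ, Sη, Set.mem_ofPred_eq, not_le] at hqη hqθ
      linear_combination hqθ + hqη + q.1 * hkθ₂ - q.1 * hkη₂
    exact (sub_pos.mp (pos_of_mul_pos_right hgap (sub_nonneg.mpr hηθ₂))).le
  rw [gammaMeasure_prod_eq_withDensity]
  refine measure_le_of_measure_diff_le hSθ hSη ?_
  rw [hpre]
  exact withDensity_preimage_le (measurePreserving_inv_mul_swap_mul hk₀.ne')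
    (involutive_inv_mul_swap_mul hk₀.ne') (by fun_prop) (hSη.diff hSθ)
    fun q hq ↦ gammaPDF_inv_mul_mul_le hr hk₀ hk₁ (hdomin q hq)

theorem stmt_12_general {Ω : Type*} [MeasureSpace Ω] [IsProbabilityMeasure (ℙ : Measure Ω)]
    (α : ℝ)
    (X₁ X₂ : Ω → ℝ) (hm₁ : Measurable X₁) (hm₂ : Measurable X₂)
    (hindep : IndepFun X₁ X₂ ℙ)
    (hlaw₁ : Measure.map X₁ ℙ = gammaMeasure α 1)
    (hlaw₂ : Measure.map X₂ ℙ = gammaMeasure α 1)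
    (θ₁ θ₂ η₁ η₂ : ℝ) (hθ₁ : 0 < θ₁) (hη₁ : 0 < η₁)
    (hη : η₁ ≤ η₂) (hθη : θ₁ ≤ η₁)
    (hprod : θ₁ * θ₂ = η₁ * η₂) :
    ∀ x : ℝ, 0 < x →
      ℙ {ω | θ₁ * X₁ ω + θ₂ * X₂ ω ≤ x} ≤ ℙ {ω | η₁ * X₁ ω + η₂ * X₂ ω ≤ x} := by
  intro x _
  have hlaw {w₁ w₂ : ℝ} : ℙ {ω | w₁ * X₁ ω + w₂ * X₂ ω ≤ x} =
      (Measure.map X₁ ℙ).prod (Measure.map X₂ ℙ) {p | w₁ * p.1 + w₂ * p.2 ≤ x} :=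
    hindep.measure_preimage_eq_prod hm₁ hm₂ (s := {p | w₁ * p.1 + w₂ * p.2 ≤ x})
      (measurableSet_le (by fun_prop) measurable_const)
  rw [hlaw, hlaw, hlaw₁, hlaw₂]
  exact gammaMeasure_prod_halfPlane_le zero_le_one hθ₁ hη₁ hη hθη hprod x

theorem stmt_12 {Ω : Type*} [MeasureSpace Ω] [IsProbabilityMeasure (ℙ : Measure Ω)]
    (α : ℝ) (hα : 0 < α)
    (X₁ X₂ : Ω → ℝ) (hm₁ : Measurable X₁) (hm₂ : Measurable X₂)
    (hindep : IndepFun X₁ X₂ ℙ)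
    (hlaw₁ : Measure.map X₁ ℙ = gammaMeasure α 1)
    (hlaw₂ : Measure.map X₂ ℙ = gammaMeasure α 1)
    (θ₁ θ₂ η₁ η₂ : ℝ) (hθ₁ : 0 < θ₁) (hη₁ : 0 < η₁)
    (hθ : θ₁ ≤ θ₂) (hη : η₁ ≤ η₂) (hθη : θ₁ ≤ η₁)
    (hprod : θ₁ * θ₂ = η₁ * η₂) :
    ∀ x : ℝ, 0 < x →
      ℙ {ω | θ₁ * X₁ ω + θ₂ * X₂ ω ≤ x} ≤ ℙ {ω | η₁ * X₁ ω + η₂ * X₂ ω ≤ x} :=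
  stmt_12_general α X₁ X₂ hm₁ hm₂ hindep hlaw₁ hlaw₂ θ₁ θ₂ η₁ η₂ hθ₁ hη₁ hη hθη hprod
end

section
/- Let X₁, X₂ be iid Gamma(α,1), θ = (θ₁, θ₂) with θ₁ ≤ θ₂. Then F_θ(x)/F_η(x) → (η₁η₂/(θ₁θ₂))^α as x → 0+, where F_θ(x) = P(θ₁X₁ + θ₂X₂ ≤ x) and F_η likewise for positive η. -/
/-!
Dividing by `x`, the event `a X₁ + b X₂ ≤ x` becomes `Y₁ + Y₂ ≤ 1` for independent
`Y₁ = (a / x) X₁ ~ Γ(α, x / a)` and `Y₂ = (b / x) X₂ ~ Γ(α, x / b)`. Its probability is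
`((x / a) (x / b))^α / Γ(α)²` times the integral of `(u v)^(α - 1) e^(-(x u / a + x v / b))` over
the unit triangle, and this integral is squeezed between `e^(-(x / a + x / b)) K` and `K`, where
`K = ∫ (u v)^(α - 1)` over the triangle is finite and positive. Hence
`F_{a,b}(x) ~ K x^(2α) / (Γ(α)² (a b)^α)` as `x → 0+`, and `K` cancels in the ratio.
-/

open MeasureTheory ProbabilityTheory Filter Set
open Topology ENNReal

def unitTriangle : Set (ℝ × ℝ) := {q | 0 ≤ q.1 ∧ 0 ≤ q.2 ∧ q.1 + q.2 ≤ 1}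

noncomputable def triangleLaplace (α r s : ℝ) : ℝ≥0∞ :=
  ∫⁻ q in unitTriangle,
    ENNReal.ofReal (q.1 ^ (α - 1) * q.2 ^ (α - 1) * Real.exp (-(r * q.1 + s * q.2)))

lemma measurableSet_unitTriangle : MeasurableSet unitTriangle :=
  (measurableSet_le measurable_const measurable_fst).inter
    ((measurableSet_le measurable_const measurable_snd).inter
      (measurableSet_le (measurable_fst.add measurable_snd) measurable_const))

lemma triangleLaplace_le {α r s : ℝ} (hr : 0 ≤ r) (hs : 0 ≤ s) :
    triangleLaplace α r s ≤ triangleLaplace α 0 0 := by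
  refine setLIntegral_mono (by fun_prop) fun q ⟨hq₁, hq₂, _⟩ => ofReal_le_ofReal ?_
  gcongr

lemma ofReal_exp_mul_triangleLaplace_le {α r s : ℝ} (hr : 0 ≤ r) (hs : 0 ≤ s) :
    ENNReal.ofReal (Real.exp (-(r + s))) * triangleLaplace α 0 0 ≤ triangleLaplace α r s := by
  rw [triangleLaplace, ← lintegral_const_mul' _ _ ofReal_ne_top]
  refine setLIntegral_mono (by fun_prop) fun q ⟨hq₁, hq₂, hq⟩ => ?_
  rw [← ofReal_mul (by positivity)]
  refine ofReal_le_ofReal ?_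
  rw [zero_mul, zero_mul, add_zero, neg_zero, Real.exp_zero, mul_one, mul_comm]
  gcongr <;> nlinarith

lemma tendsto_triangleLaplace (α : ℝ) :
    Tendsto (fun p : ℝ × ℝ => triangleLaplace α p.1 p.2) (𝓝[≥] 0)
      (𝓝 (triangleLaplace α 0 0)) := by
  have hexp : Tendsto (fun p : ℝ × ℝ => ENNReal.ofReal (Real.exp (-(p.1 + p.2))))
      (𝓝[≥] 0) (𝓝 1) := by
    have hcont : Continuous fun p : ℝ × ℝ => ENNReal.ofReal (Real.exp (-(p.1 + p.2))) :=
      ENNReal.continuous_ofReal.comp (by fun_prop)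
    simpa using (hcont.tendsto 0).mono_left nhdsWithin_le_nhds
  have hlow := ENNReal.Tendsto.mul_const (b := triangleLaplace α 0 0) hexp (.inl one_ne_zero)
  rw [one_mul] at hlow
  refine tendsto_of_tendsto_of_tendsto_of_le_of_le' hlow tendsto_const_nhds ?_ ?_
  all_goals refine eventually_nhdsWithin_of_forall fun p hp => ?_
  · exact ofReal_exp_mul_triangleLaplace_le hp.1 hp.2
  · exact triangleLaplace_le hp.1 hp.2

lemma triangleLaplace_zero_ne_top {α : ℝ} (hα : 0 < α) : triangleLaplace α 0 0 ≠ ⊤ := by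
  have hsq : unitTriangle ⊆ Icc 0 1 ×ˢ Icc 0 1 := fun q ⟨hq₁, hq₂, hq⟩ =>
    ⟨⟨hq₁, by linarith⟩, ⟨hq₂, by linarith⟩⟩
  have hfin : ∫⁻ u in Icc (0 : ℝ) 1, ENNReal.ofReal (u ^ (α - 1)) < ⊤ := by
    have hint := intervalIntegral.intervalIntegrable_rpow' (a := 0) (b := 1)
      (show -1 < α - 1 by linarith)
    rw [intervalIntegrable_iff_integrableOn_Icc_of_le zero_le_one] at hint
    exact hint.lintegral_lt_top
  refine (lt_of_le_of_lt ?_ (ENNReal.mul_lt_top hfin hfin)).ne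
  calc triangleLaplace α 0 0
      ≤ ∫⁻ q in Icc 0 1 ×ˢ Icc 0 1, ENNReal.ofReal (q.1 ^ (α - 1) * q.2 ^ (α - 1)) := by
        simpa [triangleLaplace] using lintegral_mono_set hsq
    _ = ∫⁻ q in Icc 0 1 ×ˢ Icc 0 1,
          ENNReal.ofReal (q.1 ^ (α - 1)) * ENNReal.ofReal (q.2 ^ (α - 1)) :=
        setLIntegral_congr_fun (measurableSet_Icc.prod measurableSet_Icc)
          fun q hq => ofReal_mul (Real.rpow_nonneg hq.1.1 _)
    _ = _ := by
        rw [Measure.volume_eq_prod, ← Measure.prod_restrict,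
          lintegral_prod_mul (f := fun u => ENNReal.ofReal (u ^ (α - 1)))
            (g := fun u => ENNReal.ofReal (u ^ (α - 1))) (by fun_prop) (by fun_prop)]

lemma triangleLaplace_zero_pos (α : ℝ) : 0 < triangleLaplace α 0 0 := by
  rw [triangleLaplace, setLIntegral_pos_iff (by fun_prop)]
  have hsub : Ioo (0 : ℝ) (1 / 2) ×ˢ Ioo (0 : ℝ) (1 / 2) ⊆ Function.support (fun q : ℝ × ℝ =>
      ENNReal.ofReal (q.1 ^ (α - 1) * q.2 ^ (α - 1) * Real.exp (-(0 * q.1 + 0 * q.2))))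
        ∩ unitTriangle := fun q ⟨⟨hq₁, hq₁'⟩, ⟨hq₂, hq₂'⟩⟩ =>
    ⟨by simp only [Function.mem_support, ne_eq, ofReal_eq_zero, not_le]; positivity,
      hq₁.le, hq₂.le, by linarith⟩
  refine lt_of_lt_of_le ?_ (measure_mono hsub)
  rw [Measure.volume_eq_prod, Measure.prod_prod, Real.volume_Ioo]
  norm_num

namespace ProbabilityTheory

instance (a r : ℝ) : SFinite (gammaMeasure a r) := by
  unfold gammaMeasure; infer_instance

lemma gammaPDF_eq_ofReal_mul_gammaPDF_const_mul {a r c : ℝ} (hr : 0 ≤ r) (hc : 0 < c) (u : ℝ) :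
    gammaPDF a r u = ENNReal.ofReal c * gammaPDF a (r / c) (c * u) := by
  rcases lt_or_ge u 0 with hu | hu
  · rw [gammaPDF_of_neg hu, gammaPDF_of_neg (mul_neg_of_pos_of_neg hc hu), mul_zero]
  rw [gammaPDF_of_nonneg hu, gammaPDF_of_nonneg (by positivity), ← ENNReal.ofReal_mul hc.le]
  have hca : c * c ^ (a - 1) = c ^ a := by
    simpa using (Real.rpow_add hc 1 (a - 1)).symm
  have hrate : r / c * (c * u) = r * u := by field_simp
  rw [Real.mul_rpow hc.le hu, Real.div_rpow hr hc.le, hrate, ← hca]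
  field_simp

lemma gammaMeasure_map_const_mul {a r c : ℝ} (hr : 0 ≤ r) (hc : 0 < c) :
    (gammaMeasure a r).map (c * ·) = gammaMeasure a (r / c) := by
  ext s hs
  let e := (Homeomorph.mulLeft₀ c hc.ne').toMeasurableEquiv
  have hvol : volume.map e = ENNReal.ofReal c⁻¹ • volume := by
    simpa [e, abs_of_pos hc] using Real.map_volume_mul_left hc.ne'
  rw [Measure.map_apply (measurable_const_mul c) hs, gammaMeasure, gammaMeasure,
    withDensity_apply _ hs, withDensity_apply _ (measurable_const_mul c hs),
    ← lintegral_indicator (measurable_const_mul c hs), ← lintegral_indicator hs]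
  calc ∫⁻ u, ((c * ·) ⁻¹' s).indicator (gammaPDF a r) u
      = ∫⁻ u, ENNReal.ofReal c * s.indicator (gammaPDF a (r / c)) (e u) := by
        congr with u
        by_cases hu : c * u ∈ s
        · simp [e, hu, gammaPDF_eq_ofReal_mul_gammaPDF_const_mul hr hc u]
        · simp [e, hu]
    _ = ENNReal.ofReal c * ∫⁻ y, s.indicator (gammaPDF a (r / c)) y ∂(volume.map e) := by
        rw [lintegral_map_equiv, lintegral_const_mul' _ _ ofReal_ne_top]
    _ = ∫⁻ y, s.indicator (gammaPDF a (r / c)) y := by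
        rw [hvol, lintegral_smul_measure, smul_eq_mul, ← mul_assoc, ← ofReal_mul hc.le,
          mul_inv_cancel₀ hc.ne', ofReal_one, one_mul]

lemma gammaMeasure_eq_withDensity_restrict (a r : ℝ) :
    gammaMeasure a r = (volume.restrict (Ici 0)).withDensity
      fun u => ENNReal.ofReal (r ^ a / Real.Gamma a * u ^ (a - 1) * Real.exp (-(r * u))) := by
  rw [gammaMeasure, ← withDensity_indicator measurableSet_Ici]
  congr with u
  simp only [gammaPDF_eq, indicator_apply, mem_Ici]
  split_ifs <;> simp

lemma gammaMeasure_prod_setOf_add_le_one {α r s : ℝ} (hα : 0 < α) (hr : 0 ≤ r) (hs : 0 ≤ s) :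
    (gammaMeasure α r).prod (gammaMeasure α s) {q | q.1 + q.2 ≤ 1}
      = ENNReal.ofReal (r ^ α * s ^ α / Real.Gamma α ^ 2) * triangleLaplace α r s := by
  have hH : MeasurableSet {q : ℝ × ℝ | q.1 + q.2 ≤ 1} :=
    measurableSet_le (by fun_prop) measurable_const
  have htri : {q : ℝ × ℝ | q.1 + q.2 ≤ 1} ∩ Ici 0 ×ˢ Ici 0 = unitTriangle := by
    ext q; simp only [unitTriangle, mem_inter_iff, mem_ofPred_eq, mem_prod, mem_Ici]; tauto
  rw [gammaMeasure_eq_withDensity_restrict, gammaMeasure_eq_withDensity_restrict,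
    prod_withDensity, Measure.prod_restrict, withDensity_apply _ hH,
    Measure.restrict_restrict hH, htri, triangleLaplace, ← lintegral_const_mul' _ _ ofReal_ne_top]
  · refine setLIntegral_congr_fun measurableSet_unitTriangle fun q ⟨hq₁, hq₂, _⟩ => ?_
    rw [← ofReal_mul, ← ofReal_mul]
    · congr 1
      rw [neg_add, Real.exp_add]
      ring
    all_goals have := Real.Gamma_pos_of_pos hα; positivity
  all_goals fun_prop

lemma gammaMeasure_prod_setOf_mul_add_mul_le {α a b x : ℝ} (ha : 0 < a) (hb : 0 < b)
    (hx : 0 < x) :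
    (gammaMeasure α 1).prod (gammaMeasure α 1) {p | a * p.1 + b * p.2 ≤ x}
      = (gammaMeasure α (x / a)).prod (gammaMeasure α (x / b)) {q | q.1 + q.2 ≤ 1} := by
  have hrate : ∀ c, x / c = 1 / (c / x) := fun c => by rw [one_div_div]
  rw [hrate a, hrate b, ← gammaMeasure_map_const_mul zero_le_one (div_pos ha hx),
    ← gammaMeasure_map_const_mul zero_le_one (div_pos hb hx),
    Measure.map_prod_map _ _ (measurable_const_mul _) (measurable_const_mul _),
    Measure.map_apply (by fun_prop) (measurableSet_le (by fun_prop) measurable_const)]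
  congr 1
  ext p
  have hsum : a / x * p.1 + b / x * p.2 = (a * p.1 + b * p.2) / x := by ring
  simp only [mem_preimage, Prod.map, mem_ofPred_eq, hsum, div_le_one hx]

lemma tendsto_gammaMeasure_prod_setOf_div_rpow {α a b : ℝ} (hα : 0 < α) (ha : 0 < a)
    (hb : 0 < b) :
    Tendsto (fun x => ((gammaMeasure α 1).prod (gammaMeasure α 1)
        {p | a * p.1 + b * p.2 ≤ x}).toReal / x ^ (2 * α)) (𝓝[>] 0)
      (𝓝 ((triangleLaplace α 0 0).toReal / (Real.Gamma α ^ 2 * (a * b) ^ α))) := by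
  have hpath : Tendsto (fun x : ℝ => (x / a, x / b)) (𝓝[>] 0) (𝓝[≥] 0) := by
    refine tendsto_nhdsWithin_iff.2 ⟨?_, eventually_nhdsWithin_of_forall fun x hx =>
      ⟨div_nonneg (le_of_lt hx) ha.le, div_nonneg (le_of_lt hx) hb.le⟩⟩
    have hcont : Continuous fun x : ℝ => (x / a, x / b) := by fun_prop
    have h0 := hcont.tendsto 0
    simp only [zero_div, Prod.mk_zero_zero] at h0
    exact h0.mono_left nhdsWithin_le_nhds
  have hK₀ : Tendsto ((fun p : ℝ × ℝ => triangleLaplace α p.1 p.2) ∘ fun x => (x / a, x / b))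
      (𝓝[>] 0) (𝓝 (triangleLaplace α 0 0)) := (tendsto_triangleLaplace α).comp hpath
  have hK := (ENNReal.tendsto_toReal (triangleLaplace_zero_ne_top hα)).comp hK₀
  refine (hK.div_const _).congr' (eventually_nhdsWithin_of_forall fun x (hx : 0 < x) => ?_)
  have hΓ := Real.Gamma_pos_of_pos hα
  have hscale : (x / a) ^ α * (x / b) ^ α = x ^ (2 * α) / (a * b) ^ α := by
    rw [Real.div_rpow hx.le ha.le, Real.div_rpow hx.le hb.le, Real.mul_rpow ha.le hb.le,
      two_mul, Real.rpow_add hx]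
    ring
  simp only [Function.comp_apply]
  rw [gammaMeasure_prod_setOf_mul_add_mul_le ha hb hx,
    gammaMeasure_prod_setOf_add_le_one hα (by positivity) (by positivity), toReal_mul,
    toReal_ofReal (by positivity), hscale]
  field_simp

end ProbabilityTheory

theorem stmt_14 {Ω : Type*} [MeasureSpace Ω] [IsProbabilityMeasure (ℙ : Measure Ω)]
    (α : ℝ) (hα : 0 < α)
    (X₁ X₂ : Ω → ℝ) (hm₁ : Measurable X₁) (hm₂ : Measurable X₂)
    (hindep : IndepFun X₁ X₂ ℙ)
    (hlaw₁ : Measure.map X₁ ℙ = gammaMeasure α 1)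
    (hlaw₂ : Measure.map X₂ ℙ = gammaMeasure α 1)
    (θ₁ θ₂ η₁ η₂ : ℝ) (hθ₁ : 0 < θ₁) (hθ : θ₁ ≤ θ₂) (hη₁ : 0 < η₁) (hη : η₁ ≤ η₂) :
    Tendsto (fun x : ℝ =>
        (ℙ {ω | θ₁ * X₁ ω + θ₂ * X₂ ω ≤ x}).toReal /
          (ℙ {ω | η₁ * X₁ ω + η₂ * X₂ ω ≤ x}).toReal)
      (nhdsWithin 0 (Ioi 0)) (nhds ((η₁ * η₂ / (θ₁ * θ₂)) ^ α)) := by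
  have hθ₂ : 0 < θ₂ := hθ₁.trans_le hθ
  have hη₂ : 0 < η₂ := hη₁.trans_le hη
  have hpair : Measure.map (fun ω => (X₁ ω, X₂ ω)) ℙ
      = (gammaMeasure α 1).prod (gammaMeasure α 1) := by
    rw [(indepFun_iff_map_prod_eq_prod_map_map hm₁.aemeasurable hm₂.aemeasurable).mp hindep,
      hlaw₁, hlaw₂]
  have hlaw (a b x : ℝ) : ℙ {ω | a * X₁ ω + b * X₂ ω ≤ x}
      = (gammaMeasure α 1).prod (gammaMeasure α 1) {p | a * p.1 + b * p.2 ≤ x} := by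
    rw [← hpair, Measure.map_apply (hm₁.prodMk hm₂)
      (measurableSet_le (by fun_prop : Measurable fun p : ℝ × ℝ => a * p.1 + b * p.2)
        measurable_const)]
    rfl
  have hK : 0 < (triangleLaplace α 0 0).toReal :=
    toReal_pos (triangleLaplace_zero_pos α).ne' (triangleLaplace_zero_ne_top hα)
  have hΓ := Real.Gamma_pos_of_pos hα
  have hlim := (tendsto_gammaMeasure_prod_setOf_div_rpow hα hθ₁ hθ₂).div
    (tendsto_gammaMeasure_prod_setOf_div_rpow hα hη₁ hη₂) (by positivity)
  have hconst : (triangleLaplace α 0 0).toReal / (Real.Gamma α ^ 2 * (θ₁ * θ₂) ^ α)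
      / ((triangleLaplace α 0 0).toReal / (Real.Gamma α ^ 2 * (η₁ * η₂) ^ α))
      = (η₁ * η₂ / (θ₁ * θ₂)) ^ α := by
    rw [Real.div_rpow (by positivity) (by positivity)]
    field_simp
  rw [← hconst]
  refine hlim.congr' (eventually_nhdsWithin_of_forall fun x (hx : 0 < x) => ?_)
  simp only [Pi.div_apply, hlaw]
  exact div_div_div_cancel_right₀ (by positivity) _ _
end

section
/- Let η, θ be positive vectors in ℝⁿ with η ≺_V θ (θ V-majorizes η) and ∏ᵢ(ηᵢ/θᵢ) ≥ 1. Then log η is weakly submajorized in the lower sense by log θ: for every l = 1,...,n, the sum of the l smallest components of log η is at least the sum of the l smallest components of log θ. -/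
/-!
Write `c`, `b`, `a` for the increasing rearrangements of `θ`, `η` and the intermediate vector
`θ̃`. Below the index `k₂` we have `c ≤ a` termwise, and the partial sums of `a` are dominated by
those of the increasing vector `b`; Abel summation against the decreasing weights `1 / b`,
together with `log b - log a ≥ 1 - a / b`, transfers this domination to `log a` and `log b`.
From `k₂` on, `b ≤ c` termwise, so the tail sums of `log c` dominate those of `log b`, and the
product hypothesis says that the total sum of `log c` is at most that of `log b`.
-/

open Finset

variable {n : ℕ}

/-- The increasing rearrangement of a vector. -/
noncomputable def sortv (v : Fin n → ℝ) : Fin n → ℝ := v ∘ Tuple.sort v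

/-- Partial sum of the `l` smallest components of `v`. -/
noncomputable def psum (v : Fin n → ℝ) (l : ℕ) : ℝ :=
  ∑ i ∈ Finset.univ.filter (fun i : Fin n => (i : ℕ) < l), sortv v i

/-- Ordinary majorization `η ≺ θ`: equal total sums and every partial sum of the `l`
smallest components of `η` dominates that of `θ`. -/
def Majorizes (θ η : Fin n → ℝ) : Prop :=
  (∑ i, θ i = ∑ i, η i) ∧ ∀ l : ℕ, l ≤ n → psum θ l ≤ psum η l

/-- V-majorization `η ≺_V θ`. -/
def VMajorizes (θ η : Fin n → ℝ) : Prop :=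
  ∃ (θt : Fin n → ℝ) (k₁ k₂ : ℕ), 1 ≤ k₁ ∧ k₁ ≤ n ∧ 1 ≤ k₂ ∧ k₂ ≤ n ∧
    Majorizes θt η ∧
    (∀ i : Fin n, (i : ℕ) + 1 ≤ k₁ → sortv θ i ≤ sortv θt i ∧ sortv θt i ≤ sortv η i) ∧
    (∀ i : Fin n, k₁ < (i : ℕ) + 1 → (i : ℕ) + 1 < k₂ → sortv θ i = sortv θt i) ∧
    (∀ i : Fin n, k₂ ≤ (i : ℕ) + 1 → sortv η i ≤ sortv θt i ∧ sortv θt i ≤ sortv θ i)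

noncomputable def lowerSum (f : Fin n → ℝ) (l : ℕ) : ℝ :=
  ∑ i ∈ univ.filter (fun i : Fin n => (i : ℕ) < l), f i

section lowerSum

variable {f g : Fin n → ℝ}

@[simp]
lemma lowerSum_zero (f : Fin n → ℝ) : lowerSum f 0 = 0 := by
  simp [lowerSum]

lemma lowerSum_succ (f : Fin n → ℝ) {l : ℕ} (hl : l < n) :
    lowerSum f (l + 1) = lowerSum f l + f ⟨l, hl⟩ := by
  have hfilter : univ.filter (fun i : Fin n => (i : ℕ) < l + 1)
      = insert ⟨l, hl⟩ (univ.filter (fun i : Fin n => (i : ℕ) < l)) := by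
    ext i
    simp only [mem_filter, mem_univ, true_and, mem_insert, Fin.ext_iff]
    omega
  rw [lowerSum, hfilter, sum_insert (by simp), add_comm]
  rfl

lemma lowerSum_sub (f g : Fin n → ℝ) (l : ℕ) :
    lowerSum (fun i => f i - g i) l = lowerSum f l - lowerSum g l :=
  sum_sub_distrib f g

lemma lowerSum_le_lowerSum {l : ℕ} (h : ∀ i : Fin n, (i : ℕ) < l → f i ≤ g i) :
    lowerSum f l ≤ lowerSum g l :=
  sum_le_sum fun i hi => h i (mem_filter.1 hi).2

lemma lowerSum_le_lowerSum_of_sum_le {l : ℕ} (htotal : ∑ i, f i ≤ ∑ i, g i)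
    (htail : ∀ i : Fin n, l ≤ (i : ℕ) → g i ≤ f i) :
    lowerSum f l ≤ lowerSum g l := by
  have hf := sum_filter_add_sum_filter_not univ (fun i : Fin n => (i : ℕ) < l) f
  have hg := sum_filter_add_sum_filter_not univ (fun i : Fin n => (i : ℕ) < l) g
  have htails : ∑ i ∈ univ.filter (fun i : Fin n => ¬ (i : ℕ) < l), g i
      ≤ ∑ i ∈ univ.filter (fun i : Fin n => ¬ (i : ℕ) < l), f i :=
    sum_le_sum fun i hi => htail i (not_lt.1 (mem_filter.1 hi).2)
  unfold lowerSum
  linarith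

lemma lowerSum_mul_nonneg {w d : Fin n → ℝ} (hw : Antitone w) (hw₀ : ∀ i, 0 ≤ w i)
    (hd : ∀ l ≤ n, 0 ≤ lowerSum d l) {l : ℕ} (hl : l ≤ n) :
    0 ≤ lowerSum (fun i => w i * d i) l := by
  -- Abel summation, as the invariant `w k * D (k + 1) ≤ S (k + 1)` for the partial sums of `d`
  -- and of `w * d`.
  have abel : ∀ k (hk : k < n),
      w ⟨k, hk⟩ * lowerSum d (k + 1) ≤ lowerSum (fun i => w i * d i) (k + 1) := by
    intro k
    induction k with
    | zero => intro hk; simp [lowerSum_succ _ hk]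
    | succ k ih =>
      intro hk
      have hw_step : w ⟨k + 1, hk⟩ ≤ w ⟨k, by omega⟩ := hw (Fin.mk_le_mk.2 k.le_succ)
      have hD : 0 ≤ lowerSum d (k + 1) := hd _ (by omega)
      calc w ⟨k + 1, hk⟩ * lowerSum d (k + 1 + 1)
          = w ⟨k + 1, hk⟩ * lowerSum d (k + 1) + w ⟨k + 1, hk⟩ * d ⟨k + 1, hk⟩ := by
            rw [lowerSum_succ _ hk, mul_add]
        _ ≤ w ⟨k, by omega⟩ * lowerSum d (k + 1) + w ⟨k + 1, hk⟩ * d ⟨k + 1, hk⟩ := by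
            gcongr
        _ ≤ lowerSum (fun i => w i * d i) (k + 1 + 1) := by
            rw [lowerSum_succ _ hk]
            exact add_le_add (ih (by omega)) le_rfl
  rcases l with _ | k
  · simp
  · exact (mul_nonneg (hw₀ _) (hd _ hl)).trans (abel k hl)

lemma lowerSum_log_le_of_lowerSum_le {a b : Fin n → ℝ} (ha : ∀ i, 0 < a i) (hb : ∀ i, 0 < b i)
    (hb_mono : Monotone b) (hab : ∀ l ≤ n, lowerSum a l ≤ lowerSum b l) {l : ℕ} (hl : l ≤ n) :
    lowerSum (fun i => Real.log (a i)) l ≤ lowerSum (fun i => Real.log (b i)) l := by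
  have hweights : Antitone fun i => (b i)⁻¹ := fun i j hij =>
    inv_anti₀ (hb i) (hb_mono hij)
  have habel : 0 ≤ lowerSum (fun i => (b i)⁻¹ * (b i - a i)) l :=
    lowerSum_mul_nonneg hweights (fun i => (inv_pos.2 (hb i)).le)
      (fun k hk => by rw [lowerSum_sub]; linarith [hab k hk]) hl
  have hterm : ∀ i : Fin n, (i : ℕ) < l →
      (b i)⁻¹ * (b i - a i) ≤ Real.log (b i) - Real.log (a i) := by
    intro i _
    have hlog := Real.one_sub_inv_le_log_of_pos (div_pos (hb i) (ha i))
    rw [inv_div, Real.log_div (hb i).ne' (ha i).ne'] at hlog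
    calc (b i)⁻¹ * (b i - a i) = 1 - a i / b i := by field_simp [(hb i).ne']
      _ ≤ _ := hlog
  have := habel.trans (lowerSum_le_lowerSum hterm)
  rw [lowerSum_sub] at this
  linarith

end lowerSum

lemma sum_comp_sortv (g : ℝ → ℝ) (v : Fin n → ℝ) : ∑ i, g (sortv v i) = ∑ i, g (v i) :=
  Equiv.sum_comp (Tuple.sort v) (fun i => g (v i))

lemma sum_log_le_sum_log_of_one_le_prod_div {θ η : Fin n → ℝ} (hθ : ∀ i, 0 < θ i)
    (hη : ∀ i, 0 < η i) (hprod : 1 ≤ ∏ i, η i / θ i) :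
    ∑ i, Real.log (θ i) ≤ ∑ i, Real.log (η i) := by
  have h := Real.log_nonneg hprod
  rw [Real.log_prod fun i _ => (div_pos (hη i) (hθ i)).ne'] at h
  simp only [Real.log_div (hη _).ne' (hθ _).ne', sum_sub_distrib] at h
  linarith

theorem stmt_15 (θ η : Fin n → ℝ) (hθpos : ∀ i, 0 < θ i) (hηpos : ∀ i, 0 < η i)
    (hV : VMajorizes θ η) (hprod : 1 ≤ ∏ i, η i / θ i) :
    ∀ l : ℕ, l ≤ n →
      (∑ i ∈ Finset.univ.filter (fun i : Fin n => (i : ℕ) < l), Real.log (sortv θ i)) ≤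
      (∑ i ∈ Finset.univ.filter (fun i : Fin n => (i : ℕ) < l), Real.log (sortv η i)) := by
  obtain ⟨θt, k₁, k₂, -, -, -, -, hMaj, hlow, hmid, hhigh⟩ := hV
  have hle_θt : ∀ i : Fin n, (i : ℕ) + 1 < k₂ → sortv θ i ≤ sortv θt i := fun i hi => by
    rcases le_or_gt ((i : ℕ) + 1) k₁ with h₁ | h₁
    · exact (hlow i h₁).1
    · exact (hmid i h₁ hi).le
  have hθt_pos : ∀ i, 0 < sortv θt i := fun i => by
    rcases lt_or_ge ((i : ℕ) + 1) k₂ with h₂ | h₂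
    · exact (hθpos _).trans_le (hle_θt i h₂)
    · exact (hηpos _).trans_le (hhigh i h₂).1
  intro l hl
  show lowerSum (fun i => Real.log (sortv θ i)) l ≤ lowerSum (fun i => Real.log (sortv η i)) l
  rcases lt_or_ge l k₂ with hlk | hlk
  · refine (lowerSum_le_lowerSum fun i hi => ?_).trans
      (lowerSum_log_le_of_lowerSum_le hθt_pos (fun i => hηpos _) (Tuple.monotone_sort η)
        hMaj.2 hl)
    exact Real.log_le_log (hθpos _) (hle_θt i (by omega))
  · refine lowerSum_le_lowerSum_of_sum_le ?_ fun i hi =>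
      Real.log_le_log (hηpos _) ((hhigh i (by omega)).1.trans (hhigh i (by omega)).2)
    simpa only [sum_comp_sortv] using sum_log_le_sum_log_of_one_le_prod_div hθpos hηpos hprod
end

section
/- Let n = 3, α = 1, θ = (1, 6, 10), η = (4, 5, 10), and X₁, X₂, X₃ iid Exponential(1). Then P(X₁ + 6X₂ + 10X₃ ≤ x) ≥ P(4X₁ + 5X₂ + 10X₃ ≤ x) for all x ≥ 0, i.e., the distribution functions never cross. -/
/-!
If `X ∼ Exp(1)` is independent of `Y`, conditioning on `X` gives
`P(a X + Y ≤ x) = ∫₀^∞ e^{-s} F_Y(x - a s) ds`, and this transform sends the CDF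
`1 - e^{-y/l}` of `l·Exp(1)` to an explicit combination of the CDFs of `l·Exp(1)` and `a·Exp(1)`.
Applying it twice writes the CDF of `a X₁ + b X₂ + c X₃` as a combination of
`1 - e^{-x/a}`, `1 - e^{-x/b}`, `1 - e^{-x/c}`. For `θ = (1, 6, 10)` and `η = (4, 5, 10)`,
in the variable `u = e^{-x/60} ∈ (0, 1]` the difference `45 (F_θ - F_η)(x)` is
`120 u^15 - 225 u^12 + 81 u^10 + 25 u^6 - u^60 = u^6 (1 - u)^3 P(u)`,
where `P` has positive coefficients.
-/

open MeasureTheory ProbabilityTheory Real Set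

-- The CDF of `a X` for `X ∼ Exp(1)`: `a` is a scale, not a rate as in `expMeasure`.
noncomputable def expCDF (a y : ℝ) : ℝ := if 0 ≤ y then 1 - exp (-(y / a)) else 0

lemma measurable_expCDF (a : ℝ) : Measurable (expCDF a) :=
  Measurable.ite measurableSet_Ici (by fun_prop) measurable_const

lemma abs_expCDF_le_one {a : ℝ} (ha : 0 < a) (y : ℝ) : |expCDF a y| ≤ 1 := by
  unfold expCDF
  split_ifs with hy
  · have : exp (-(y / a)) ≤ 1 := exp_le_one_iff.2 (neg_nonpos.2 (div_nonneg hy ha.le))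
    rw [abs_le]
    constructor <;> linarith [exp_pos (-(y / a))]
  · simp

lemma integrableOn_exp_neg_mul {f : ℝ → ℝ} (hf : AEStronglyMeasurable f) {C : ℝ}
    (hC : ∀ y, ‖f y‖ ≤ C) : IntegrableOn (fun s ↦ exp (-s) * f s) (Ioi 0) := by
  have hexp : IntegrableOn (fun s ↦ exp (-s)) (Ioi (0 : ℝ)) := by
    simpa using exp_neg_integrableOn_Ioi 0 one_pos
  exact hexp.mul_bdd hf.restrict (.of_forall hC)

lemma integral_exp_neg_mul_expCDF {a l : ℝ} (ha : 0 < a) (hl : l ≠ 0) (hal : a ≠ l) (x : ℝ) :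
    ∫ s in Ioi 0, exp (-s) * expCDF l (x - a * s) =
      l / (l - a) * expCDF l x - a / (l - a) * expCDF a x := by
  have hla : l - a ≠ 0 := sub_ne_zero.2 hal.symm
  have hvanish : ∀ s ∈ Ioi 0 \ Ioc 0 (x / a), exp (-s) * expCDF l (x - a * s) = 0 := by
    rintro s ⟨hs0, hs⟩
    have : x < a * s := by
      rw [← div_lt_iff₀' ha]
      simpa [mem_Ioi.1 hs0] using hs
    simp [expCDF, this]
  rw [setIntegral_eq_of_subset_of_forall_sdiff_eq_zero measurableSet_Ioi Ioc_subset_Ioi_self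
    hvanish]
  rcases lt_or_ge x 0 with hx | hx
  · rw [Ioc_eq_empty (not_lt.2 (div_neg_of_neg_of_pos hx ha).le)]
    simp [expCDF, hx.not_ge]
  have hderiv : ∀ s, HasDerivAt (fun s ↦ -exp (-s) + l / (l - a) * exp (-((x - a * s) / l) - s))
      (exp (-s) * (1 - exp (-((x - a * s) / l)))) s := by
    intro s
    have hinner : HasDerivAt (fun s ↦ -((x - a * s) / l) - s) (a / l - 1) s := by
      refine ((((hasDerivAt_id s).const_mul a).const_sub x).div_const l).neg.sub
        (hasDerivAt_id s) |>.congr_deriv ?_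
      ring
    refine ((hasDerivAt_neg s).exp.neg).add (hinner.exp.const_mul (l / (l - a))) |>.congr_deriv ?_
    rw [sub_eq_add_neg (-_), exp_add]
    field_simp
    ring
  rw [← intervalIntegral.integral_of_le (div_nonneg hx ha.le),
    intervalIntegral.integral_congr (g := fun s ↦ exp (-s) * (1 - exp (-((x - a * s) / l)))),
    intervalIntegral.integral_eq_sub_of_hasDerivAt (fun s _ ↦ hderiv s)
      (Continuous.intervalIntegrable (by fun_prop) _ _)]
  · have hend : -((x - a * (x / a)) / l) - x / a = -(x / a) := by field_simp; ring
    simp only [expCDF, if_pos hx, hend, mul_zero, sub_zero, neg_zero, exp_zero]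
    field_simp
    ring
  · intro s hs
    rw [uIcc_of_le (div_nonneg hx ha.le)] at hs
    have : a * s ≤ x := by rw [← le_div_iff₀' ha]; exact hs.2
    simp [expCDF, this]

lemma integral_expMeasure_one (f : ℝ → ℝ) :
    ∫ s, f s ∂expMeasure 1 = ∫ s in Ioi 0, exp (-s) * f s := by
  have hdensity : ∀ s,
      (exponentialPDF 1 s).toReal • f s = (Ici 0).indicator (fun s ↦ exp (-s) * f s) s := by
    intro s
    by_cases hs : 0 ≤ s <;> simp [exponentialPDF_eq, hs, (exp_pos _).le]
  calc ∫ s, f s ∂expMeasure 1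
      = ∫ s, (exponentialPDF 1 s).toReal • f s :=
        integral_withDensity_eq_integral_toReal_smul
          (measurable_exponentialPDFReal 1).ennreal_ofReal
          (.of_forall fun _ ↦ ENNReal.ofReal_lt_top) f
    _ = ∫ s in Ioi 0, exp (-s) * f s := by
        simp_rw [hdensity]
        rw [integral_indicator measurableSet_Ici, integral_Ici_eq_integral_Ioi]

section Convolution

variable {Ω : Type*} [MeasureSpace Ω] [IsProbabilityMeasure (ℙ : Measure Ω)]

lemma cdf_map_mul_add_eq_integral {X Y : Ω → ℝ} (hX : AEMeasurable X) (hY : AEMeasurable Y)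
    (hXY : IndepFun X Y) (hlaw : Measure.map X ℙ = expMeasure 1) (a x : ℝ) :
    cdf (Measure.map (fun ω ↦ a * X ω + Y ω) ℙ) x =
      ∫ s in Ioi 0, exp (-s) * cdf (Measure.map Y ℙ) (x - a * s) := by
  have := isProbabilityMeasure_expMeasure one_pos
  have := Measure.isProbabilityMeasure_map hY
  have := Measure.isProbabilityMeasure_map (μ := ℙ) (f := fun ω ↦ a * X ω + Y ω) (by fun_prop)
  have hjoint : Measure.map (fun ω ↦ (X ω, Y ω)) ℙ = (expMeasure 1).prod (Measure.map Y ℙ) := by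
    rw [← hlaw]; exact (indepFun_iff_map_prod_eq_prod_map_map hX hY).1 hXY
  have hS : MeasurableSet {p : ℝ × ℝ | a * p.1 + p.2 ≤ x} :=
    measurableSet_le (by fun_prop) measurable_const
  have hslice : ∀ s, Prod.mk s ⁻¹' {p : ℝ × ℝ | a * p.1 + p.2 ≤ x} = Iic (x - a * s) := by
    intro s
    ext t
    simp only [mem_preimage, mem_ofPred_eq, mem_Iic]
    constructor <;> intro h <;> linarith
  have hint : Integrable (fun s ↦ cdf (Measure.map Y ℙ) (x - a * s)) (expMeasure 1) :=
    .of_bound (((cdf _).mono.measurable).comp (by fun_prop)).aestronglyMeasurable 1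
      (.of_forall fun s ↦ by simp [abs_of_nonneg (cdf_nonneg _ _), cdf_le_one])
  have hnonneg : 0 ≤ ∫ s in Ioi 0, exp (-s) * cdf (Measure.map Y ℙ) (x - a * s) :=
    setIntegral_nonneg measurableSet_Ioi fun s _ ↦ mul_nonneg (exp_pos _).le (cdf_nonneg _ _)
  rw [cdf_eq_real, measureReal_def, ← ENNReal.toReal_ofReal hnonneg, ← integral_expMeasure_one,
    ofReal_integral_eq_lintegral_ofReal hint (.of_forall fun _ ↦ cdf_nonneg _ _)]
  simp only [ofReal_cdf, ← hslice]
  rw [← Measure.prod_apply hS, ← hjoint, Measure.map_apply₀ (by fun_prop) hS.nullMeasurableSet,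
    Measure.map_apply₀ (by fun_prop) measurableSet_Iic.nullMeasurableSet]
  rfl

lemma cdf_map_const_mul_eq_expCDF {X : Ω → ℝ} (hX : AEMeasurable X)
    (hlaw : Measure.map X ℙ = expMeasure 1) {c : ℝ} (hc : 0 < c) :
    cdf (Measure.map (fun ω ↦ c * X ω) ℙ) = expCDF c := by
  funext y
  have := isProbabilityMeasure_expMeasure one_pos
  have := Measure.isProbabilityMeasure_map (hX.const_mul c)
  have hpre : (fun ω ↦ c * X ω) ⁻¹' Iic y = X ⁻¹' Iic (y / c) := by
    ext ω
    simp [le_div_iff₀ hc, mul_comm]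
  rw [cdf_eq_real, measureReal_def, Measure.map_apply₀ (by fun_prop)
    measurableSet_Iic.nullMeasurableSet, hpre, ← Measure.map_apply₀ hX
    measurableSet_Iic.nullMeasurableSet, hlaw, ← ofReal_cdf, ENNReal.toReal_ofReal (cdf_nonneg _ _),
    cdf_expMeasure_eq one_pos]
  simp [expCDF, le_div_iff₀ hc]

lemma cdf_map_mul_add_mul_eq {X Y : Ω → ℝ} (hX : AEMeasurable X) (hY : AEMeasurable Y)
    (hXY : IndepFun X Y) (hlawX : Measure.map X ℙ = expMeasure 1)
    (hlawY : Measure.map Y ℙ = expMeasure 1) {b c : ℝ} (hb : 0 < b) (hc : 0 < c) (hbc : b ≠ c) :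
    cdf (Measure.map (fun ω ↦ b * X ω + c * Y ω) ℙ) =
      fun y ↦ c / (c - b) * expCDF c y - b / (c - b) * expCDF b y := by
  funext y
  rw [cdf_map_mul_add_eq_integral hX (hY.const_mul c)
    (hXY.comp measurable_id (measurable_const_mul c)) hlawX,
    cdf_map_const_mul_eq_expCDF hY hlawY hc, integral_exp_neg_mul_expCDF hb hc.ne' hbc]

noncomputable def hypoexpCDF (a b c x : ℝ) : ℝ :=
  c / (c - b) * (c / (c - a) * expCDF c x - a / (c - a) * expCDF a x) -
    b / (c - b) * (b / (b - a) * expCDF b x - a / (b - a) * expCDF a x)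

lemma measure_mul_add_mul_add_mul_le_eq {X : Fin 3 → Ω → ℝ} (hmeas : ∀ i, Measurable (X i))
    (hindep : iIndepFun X) (hlaw : ∀ i, Measure.map (X i) ℙ = expMeasure 1) {a b c : ℝ}
    (ha : 0 < a) (hb : 0 < b) (hc : 0 < c) (hab : a ≠ b) (hac : a ≠ c) (hbc : b ≠ c) (x : ℝ) :
    ℙ {ω | a * X 0 ω + b * X 1 ω + c * X 2 ω ≤ x} = ENNReal.ofReal (hypoexpCDF a b c x) := by
  have h12 : IndepFun (X 1) (X 2) := hindep.indepFun (by decide)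
  have h0 : IndepFun (X 0) (fun ω ↦ b * X 1 ω + c * X 2 ω) :=
    ((hindep.indepFun_prodMk hmeas 1 2 0 (by decide) (by decide)).comp
      (by fun_prop : Measurable fun p : ℝ × ℝ ↦ b * p.1 + c * p.2) measurable_id).symm
  have hsum : AEMeasurable (fun ω ↦ a * X 0 ω + (b * X 1 ω + c * X 2 ω)) := by fun_prop
  have := Measure.isProbabilityMeasure_map hsum
  have hint : ∀ l, 0 < l → IntegrableOn (fun s ↦ exp (-s) * expCDF l (x - a * s)) (Ioi 0) :=
    fun l hl ↦ integrableOn_exp_neg_mul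
      ((measurable_expCDF l).comp (by fun_prop)).aestronglyMeasurable
      (fun _ ↦ abs_expCDF_le_one hl _)
  calc ℙ {ω | a * X 0 ω + b * X 1 ω + c * X 2 ω ≤ x}
      = Measure.map (fun ω ↦ a * X 0 ω + (b * X 1 ω + c * X 2 ω)) ℙ (Iic x) := by
        rw [Measure.map_apply₀ hsum measurableSet_Iic.nullMeasurableSet]
        simp only [add_assoc]
        rfl
    _ = ENNReal.ofReal (cdf (Measure.map (fun ω ↦ a * X 0 ω + (b * X 1 ω + c * X 2 ω)) ℙ) x) :=
        (ofReal_cdf _ _).symm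
    _ = ENNReal.ofReal (hypoexpCDF a b c x) := by
        rw [cdf_map_mul_add_eq_integral (hmeas 0).aemeasurable (by fun_prop) h0 (hlaw 0),
          cdf_map_mul_add_mul_eq (hmeas 1).aemeasurable (hmeas 2).aemeasurable h12 (hlaw 1) (hlaw 2)
            hb hc hbc]
        simp_rw [mul_sub, mul_left_comm (exp _)]
        rw [integral_sub ((hint c hc).const_mul _) ((hint b hb).const_mul _), integral_const_mul,
          integral_const_mul, integral_exp_neg_mul_expCDF ha hc.ne' hac,
          integral_exp_neg_mul_expCDF ha hb.ne' hab]
        rfl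

end Convolution

lemma crossing_polynomial_nonneg {u : ℝ} (h0 : 0 ≤ u) (h1 : u ≤ 1) :
    0 ≤ 120 * u ^ 15 - 225 * u ^ 12 + 81 * u ^ 10 + 25 * u ^ 6 - u ^ 60 := by
  have hcert : 0 ≤ u ^ 6 * (1 - u) ^ 3 * (25 + 75*u + 150*u^2 + 250*u^3 + 456*u^4 + 768*u^5
      + 961*u^6 + 1035*u^7 + 990*u^8 + 946*u^9 + 903*u^10 + 861*u^11 + 820*u^12 + 780*u^13
      + 741*u^14 + 703*u^15 + 666*u^16 + 630*u^17 + 595*u^18 + 561*u^19 + 528*u^20 + 496*u^21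
      + 465*u^22 + 435*u^23 + 406*u^24 + 378*u^25 + 351*u^26 + 325*u^27 + 300*u^28 + 276*u^29
      + 253*u^30 + 231*u^31 + 210*u^32 + 190*u^33 + 171*u^34 + 153*u^35 + 136*u^36 + 120*u^37
      + 105*u^38 + 91*u^39 + 78*u^40 + 66*u^41 + 55*u^42 + 45*u^43 + 36*u^44 + 28*u^45
      + 21*u^46 + 15*u^47 + 10*u^48 + 6*u^49 + 3*u^50 + u^51) := by
    have := sub_nonneg.2 h1
    positivity
  linear_combination hcert

lemma expCDF_eq_one_sub_pow {a d x : ℝ} (hx : 0 ≤ x) {n : ℕ} (hn : n ≠ 0) (hd : a * n = d) :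
    expCDF a x = 1 - exp (-(x / d)) ^ n := by
  rw [expCDF, if_pos hx, ← exp_nat_mul, ← hd, mul_neg, mul_comm a, ← div_div,
    ← mul_div_assoc, mul_div_cancel₀ x (Nat.cast_ne_zero.2 hn)]

lemma hypoexpCDF_four_five_ten_le (x : ℝ) (hx : 0 ≤ x) :
    hypoexpCDF 4 5 10 x ≤ hypoexpCDF 1 6 10 x := by
  have hu0 : 0 ≤ exp (-(x / 60)) := (exp_pos _).le
  have hu1 : exp (-(x / 60)) ≤ 1 := exp_le_one_iff.2 (neg_nonpos.2 (by positivity))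
  simp only [hypoexpCDF,
    expCDF_eq_one_sub_pow hx (by norm_num) (show (1:ℝ) * (60 : ℕ) = 60 by norm_num),
    expCDF_eq_one_sub_pow hx (by norm_num) (show (4:ℝ) * (15 : ℕ) = 60 by norm_num),
    expCDF_eq_one_sub_pow hx (by norm_num) (show (5:ℝ) * (12 : ℕ) = 60 by norm_num),
    expCDF_eq_one_sub_pow hx (by norm_num) (show (6:ℝ) * (10 : ℕ) = 60 by norm_num),
    expCDF_eq_one_sub_pow hx (by norm_num) (show (10:ℝ) * (6 : ℕ) = 60 by norm_num)]
  linear_combination (1 / 45) * crossing_polynomial_nonneg hu0 hu1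

theorem stmt_16 {Ω : Type*} [MeasureSpace Ω] [IsProbabilityMeasure (ℙ : Measure Ω)]
    (X : Fin 3 → Ω → ℝ) (hmeas : ∀ i, Measurable (X i))
    (hindep : iIndepFun X ℙ)
    (hlaw : ∀ i, Measure.map (X i) ℙ = expMeasure 1) :
    ∀ x : ℝ, 0 ≤ x →
      ℙ {ω | 4 * X 0 ω + 5 * X 1 ω + 10 * X 2 ω ≤ x} ≤
      ℙ {ω | X 0 ω + 6 * X 1 ω + 10 * X 2 ω ≤ x} := by
  intro x hx
  have hη := measure_mul_add_mul_add_mul_le_eq hmeas hindep hlaw (a := 4) (b := 5) (c := 10)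
    (by norm_num) (by norm_num) (by norm_num) (by norm_num) (by norm_num) (by norm_num) x
  have hθ := measure_mul_add_mul_add_mul_le_eq hmeas hindep hlaw (a := 1) (b := 6) (c := 10)
    (by norm_num) (by norm_num) (by norm_num) (by norm_num) (by norm_num) (by norm_num) x
  simp only [one_mul] at hθ
  rw [hη, hθ]
  exact ENNReal.ofReal_le_ofReal (hypoexpCDF_four_five_ten_le x hx)
end

section
/- Suppose f and g are twice continuously differentiable probability densities on an interval I ⊂ (0,∞), f is unimodal with f' > 0 exactly on an interval I₊ whose supremum is x₀ < ∞, f ≤_lr g (that is, f(x)g(y) ≥ f(y)g(x) for x ≤ y), and suppose the function f' - λg' has at most two sign changes on I with pattern +,-,+ for every λ > 0. If λ < f(x₀)/g(x₀) and f'(x) - λg'(x) crosses zero from below at some point of I₊, then f'(x) - λg'(x) ≥ 0 for all x ≥ x₀, and this yields the contradiction f(x₀) ≤ λ g(x₀). -/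
open Set Filter MeasureTheory

/-! `f - λ g` is nondecreasing on `[x₀, ∞)`: on `I` by the sign pattern of `f' - λ g'`, which
has already turned positive inside `I₊`, and beyond `I` because both densities vanish there.
Since `f - λ g` tends to `0` at infinity, `f x₀ - λ g x₀ ≤ 0`. -/

lemma nonneg_of_forall_not_neg_pos_neg {I : Set ℝ} {φ : ℝ → ℝ}
    (hpattern : ∀ x ∈ I, ∀ y ∈ I, ∀ z ∈ I, x < y → y < z → ¬(φ x < 0 ∧ 0 < φ y ∧ φ z < 0))
    {a b : ℝ} (ha : a ∈ I) (hb : b ∈ I) (hab : a < b) (hφa : φ a < 0) (hφb : 0 < φ b) :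
    ∀ x ∈ I, b ≤ x → 0 ≤ φ x := by
  intro x hx hbx
  by_contra! hφx
  rcases hbx.eq_or_lt with rfl | hbx
  · linarith
  · exact hpattern a ha b hb x hx hab hbx ⟨hφa, hφb, hφx⟩

lemma deriv_eq_zero_of_eqOn_Ici {f : ℝ → ℝ} {x : ℝ} (hf : DifferentiableAt ℝ f x)
    (h : EqOn f 0 (Ici x)) : deriv f x = 0 := by
  rw [← hf.derivWithin (uniqueDiffOn_Ici x x self_mem_Ici),
    derivWithin_congr h (h self_mem_Ici)]
  simp

lemma Set.OrdConnected.deriv_eq_zero_of_notMem {I : Set ℝ} (hI : I.OrdConnected) {f : ℝ → ℝ}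
    (hf0 : ∀ y ∉ I, f y = 0) {a x : ℝ} (ha : a ∈ I) (hax : a ≤ x) (hx : x ∉ I)
    (hf : DifferentiableAt ℝ f x) : deriv f x = 0 :=
  deriv_eq_zero_of_eqOn_Ici hf fun y hxy => hf0 y fun hy => hx (hI.out ha hy ⟨hax, hxy⟩)

lemma le_of_deriv_nonneg_of_tendsto_atTop {h : ℝ → ℝ} {a l : ℝ} (hcont : ContinuousOn h (Ici a))
    (hdiff : DifferentiableOn ℝ h (Ioi a)) (hderiv : ∀ x ∈ Ioi a, 0 ≤ deriv h x)
    (hlim : Tendsto h atTop (nhds l)) : h a ≤ l := by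
  have hmono : MonotoneOn h (Ici a) :=
    monotoneOn_of_deriv_nonneg (convex_Ici a) hcont (by rwa [interior_Ici])
      (by rwa [interior_Ici])
  exact ge_of_tendsto hlim (eventually_ge_atTop a |>.mono fun y hy =>
    hmono self_mem_Ici hy hy)

theorem stmt_17_general (I : Set ℝ) (hIconn : I.OrdConnected)
    (f g : ℝ → ℝ) (hf : ContDiff ℝ 2 f) (hg : ContDiff ℝ 2 g)
    (hsupp : ∀ x ∉ I, f x = 0 ∧ g x = 0)
    (hftop : Tendsto f atTop (nhds 0)) (hgtop : Tendsto g atTop (nhds 0))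
    -- `f' > 0` exactly on an interval `Iplus` whose supremum is `x₀ < ∞`
    (Iplus : Set ℝ) (hIplus : Iplus = {x ∈ I | 0 < deriv f x})
    (x₀ : ℝ) (hx₀ : IsLUB Iplus x₀)
    -- at most two sign changes with pattern `+,-,+` for every `λ > 0`
    (hpattern : ∀ lam : ℝ, 0 < lam → ∀ x ∈ I, ∀ y ∈ I, ∀ z ∈ I, x < y → y < z →
      ¬(deriv f x - lam * deriv g x < 0 ∧ 0 < deriv f y - lam * deriv g y ∧
        deriv f z - lam * deriv g z < 0))
    (lam : ℝ) (hlam0 : 0 < lam)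
    -- `f' - λg'` crosses zero from below at some point of `Iplus`
    (hcross : ∃ a ∈ Iplus, ∃ b ∈ Iplus, a < b ∧
      deriv f a - lam * deriv g a < 0 ∧ 0 < deriv f b - lam * deriv g b) :
    (∀ x ∈ I, x₀ ≤ x → 0 ≤ deriv f x - lam * deriv g x) ∧ f x₀ ≤ lam * g x₀ := by
  have hfd : Differentiable ℝ f := hf.differentiable (by norm_num)
  have hgd : Differentiable ℝ g := hg.differentiable (by norm_num)
  obtain ⟨a, ha, b, hb, hab, hφa, hφb⟩ := hcross
  have hax₀ : a ≤ x₀ := hx₀.1 ha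
  have hbx₀ : b ≤ x₀ := hx₀.1 hb
  subst hIplus
  have hsign : ∀ x ∈ I, x₀ ≤ x → 0 ≤ deriv f x - lam * deriv g x := fun x hx hx₀x =>
    nonneg_of_forall_not_neg_pos_neg (hpattern lam hlam0) ha.1 hb.1 hab hφa hφb x hx
      (hbx₀.trans hx₀x)
  refine ⟨hsign, ?_⟩
  have hφ : ∀ x ∈ Ioi x₀, 0 ≤ deriv f x - lam * deriv g x := by
    intro x hx
    by_cases hxI : x ∈ I
    · exact hsign x hxI hx.le
    · have hax : a ≤ x := hax₀.trans hx.le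
      rw [hIconn.deriv_eq_zero_of_notMem (fun y hy => (hsupp y hy).1) ha.1 hax hxI (hfd x),
        hIconn.deriv_eq_zero_of_notMem (fun y hy => (hsupp y hy).2) ha.1 hax hxI (hgd x)]
      simp
  have hdiff : Differentiable ℝ fun x => f x - lam * g x := hfd.sub (hgd.const_mul lam)
  have hderiv : ∀ x, deriv (fun x => f x - lam * g x) x = deriv f x - lam * deriv g x :=
    fun x => ((hfd x).hasDerivAt.sub ((hgd x).hasDerivAt.const_mul lam)).deriv
  have key := le_of_deriv_nonneg_of_tendsto_atTop hdiff.continuous.continuousOn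
    hdiff.differentiableOn (fun x hx => hderiv x ▸ hφ x hx)
    (by simpa using hftop.sub (hgtop.const_mul lam))
  linarith

theorem stmt_17 (I : Set ℝ) (hI : I ⊆ Ioi 0) (hIconn : I.OrdConnected)
    (f g : ℝ → ℝ) (hf : ContDiff ℝ 2 f) (hg : ContDiff ℝ 2 g)
    (hfpos : ∀ x ∈ I, 0 < f x) (hgpos : ∀ x ∈ I, 0 < g x)
    (hsupp : ∀ x ∉ I, f x = 0 ∧ g x = 0)
    (hfdens : ∫ x in I, f x = 1) (hgdens : ∫ x in I, g x = 1)
    (hftop : Tendsto f atTop (nhds 0)) (hgtop : Tendsto g atTop (nhds 0))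
    (hfint : IntegrableOn (deriv f) (Ici 0)) (hgint : IntegrableOn (deriv g) (Ici 0))
    -- `f' > 0` exactly on an interval `Iplus` whose supremum is `x₀ < ∞`
    (Iplus : Set ℝ) (hIplus : Iplus = {x ∈ I | 0 < deriv f x})
    (hIplusConn : Iplus.OrdConnected) (x₀ : ℝ) (hx₀ : IsLUB Iplus x₀)
    -- `f` unimodal and `f ≤_lr g`
    (hlr : ∀ x y : ℝ, x ≤ y → f y * g x ≤ f x * g y)
    -- at most two sign changes with pattern `+,-,+` for every `λ > 0`
    (hpattern : ∀ lam : ℝ, 0 < lam → ∀ x ∈ I, ∀ y ∈ I, ∀ z ∈ I, x < y → y < z →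
      ¬(deriv f x - lam * deriv g x < 0 ∧ 0 < deriv f y - lam * deriv g y ∧
        deriv f z - lam * deriv g z < 0))
    (lam : ℝ) (hlam0 : 0 < lam) (hlam : lam < f x₀ / g x₀)
    -- `f' - λg'` crosses zero from below at some point of `Iplus`
    (hcross : ∃ a ∈ Iplus, ∃ b ∈ Iplus, a < b ∧
      deriv f a - lam * deriv g a < 0 ∧ 0 < deriv f b - lam * deriv g b) :
    (∀ x ∈ I, x₀ ≤ x → 0 ≤ deriv f x - lam * deriv g x) ∧ f x₀ ≤ lam * g x₀ :=
  stmt_17_general I hIconn f g hf hg hsupp hftop hgtop Iplus hIplus x₀ hx₀ hpattern lam hlam0 hcross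
end
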